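/- arXiv:1206.1422 — 5 statements merged into one kernel-verified Lean document; each statement's English description precedes it below -/
import Mathlib

section
/- For any distinct points p_1, …, p_n in ℝ² with a fixed stacking order, the visible perimeter of the scaled configuration is monotone in the scaling factor: for all real numbers 0 < ε ≤ ε', one has vis(εp_1, …, εp_n) ≤ vis(ε'p_1, …, ε'p_n). -/
open MeasureTheory Filter Set Metric
open scoped ENNReal NNReal Topology

noncomputable section

/-- The Euclidean plane. -/
abbrev Pt : Type := EuclideanSpace ℝ (Fin 2)

/-- The visible perimeter of the arrangement of unit disks centered at `p 0, …, p (n-1)`,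
where `p i` is stacked below `p j` whenever `i < j`: the sum over `i` of the
1-dimensional Hausdorff measure of the part of the boundary circle of the disk at `p i`
not covered by the (open) disks stacked below it. -/
def vis {n : ℕ} (p : Fin n → Pt) : ℝ≥0∞ :=
  ∑ i : Fin n, μH[1] {x : Pt | dist x (p i) = 1 ∧ ∀ j : Fin n, j < i → 1 ≤ dist x (p j)}

/- The external angles associated to the sequence of points `p 0, …, p (n-1)`:
`τ_1 = 2π`; for `i > 1`, `τ_i = 0` if `p i` lies in the convex hull of the previous
points, and otherwise `τ_i` is the arc-length measure of the set of unit vectors `u`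
with `⟨u, p i⟩ > ⟨u, p j⟩` for all `j < i`. -/
open Classical in
def extAngle {n : ℕ} (p : Fin n → Pt) (i : Fin n) : ℝ≥0∞ :=
  if (i : ℕ) = 0 then ENNReal.ofReal (2 * Real.pi)
  else if p i ∈ convexHull ℝ (p '' {j : Fin n | j < i}) then 0
  else μH[1] {u : Pt | ‖u‖ = 1 ∧ ∀ j : Fin n, j < i →
    (inner ℝ u (p j) : ℝ) < (inner ℝ u (p i) : ℝ)}

/-- `vinf n` is `v(n)`: the infimum over all sets of `n` distinct points (encoded as
injective functions `Fin n → Pt`) of the maximum visible perimeter over all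
stacking orders (enumerations). -/
def vinf (n : ℕ) : ℝ≥0∞ :=
  ⨅ (p : Fin n → Pt) (_ : Function.Injective p),
    ⨆ σ : Equiv.Perm (Fin n), vis (p ∘ σ)

/-- A set of `n` points is `C`-dense if its maximum pairwise distance is at most
`C · n^{1/2}` times its minimum (nonzero) pairwise distance. -/
def CDense {n : ℕ} (C : ℝ) (p : Fin n → Pt) : Prop :=
  ∀ i j k l : Fin n, k ≠ l →
    dist (p i) (p j) ≤ C * Real.sqrt n * dist (p k) (p l)

/- The perimeter of the convex hull of `Q`: the 1-dimensional Hausdorff measure of its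
boundary if the hull has nonempty interior, and otherwise (hull is a point or a segment)
twice its diameter (= twice its length; `0` for a point or the empty set). -/
open Classical in
def per (Q : Set Pt) : ℝ≥0∞ :=
  if (interior (convexHull ℝ Q)).Nonempty then μH[1] (frontier (convexHull ℝ Q))
  else 2 * EMetric.diam (convexHull ℝ Q)

/-- The `k × k` integer grid `{1, …, k} × {1, …, k}` in the plane. -/
def grid (k : ℕ) : Set Pt :=
  {x | ∃ a b : ℕ, 1 ≤ a ∧ a ≤ k ∧ 1 ≤ b ∧ b ≤ k ∧ x 0 = (a : ℝ) ∧ x 1 = (b : ℝ)}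

/-!
Translating the `i`-th circle of `ε • p` by `(ε' - ε) • p i` gives the `i`-th circle of `ε' • p`,
and it maps the visible arc into the visible arc: with `u` the unit vector from the centre and
`d = p i - p j`, the point is outside the `j`-th disk iff `1 ≤ ‖u + t • d‖` (at scale `t`), and
since `t ↦ ‖u + t • d‖` is convex with value `1` at `t = 0`, this persists for all `t ≥ ε` once it
holds at `t = ε > 0`. Translations preserve Hausdorff measure, so each summand of `vis` grows.
-/

open scoped Pointwise

lemma norm_add_smul_le_norm_add_smul_of_norm_le {E : Type*} [SeminormedAddCommGroup E]
    [NormedSpace ℝ E] (u d : E) {ε ε' : ℝ} (hε : 0 < ε) (hεε' : ε ≤ ε')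
    (h : ‖u‖ ≤ ‖u + ε • d‖) : ‖u + ε • d‖ ≤ ‖u + ε' • d‖ := by
  have hε' : 0 < ε' := hε.trans_le hεε'
  set l := ε / ε'
  have hl : 0 < l := div_pos hε hε'
  have hl1 : l ≤ 1 := (div_le_one hε').2 hεε'
  have hcomb : u + ε • d = (1 - l) • u + l • (u + ε' • d) := by
    rw [smul_add, smul_smul, div_mul_cancel₀ _ hε'.ne']
    module
  have hconv : ‖u + ε • d‖ ≤ (1 - l) * ‖u‖ + l * ‖u + ε' • d‖ := by
    calc ‖u + ε • d‖ ≤ ‖(1 - l) • u‖ + ‖l • (u + ε' • d)‖ := hcomb ▸ norm_add_le _ _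
      _ = (1 - l) * ‖u‖ + l * ‖u + ε' • d‖ := by
        rw [norm_smul, norm_smul, Real.norm_of_nonneg (sub_nonneg.2 hl1),
          Real.norm_of_nonneg hl.le]
  nlinarith

def visibleArc {X : Type*} [PseudoMetricSpace X] {n : ℕ} (p : Fin n → X) (i : Fin n) : Set X :=
  {x | dist x (p i) = 1 ∧ ∀ j : Fin n, j < i → 1 ≤ dist x (p j)}

lemma vis_eq_sum_visibleArc {n : ℕ} (p : Fin n → Pt) :
    vis p = ∑ i : Fin n, μH[1] (visibleArc p i) :=
  rfl

lemma vadd_visibleArc_smul_subset {E : Type*} [SeminormedAddCommGroup E] [NormedSpace ℝ E]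
    {n : ℕ} (p : Fin n → E) (i : Fin n) {ε ε' : ℝ} (hε : 0 < ε) (hεε' : ε ≤ ε') :
    ((ε' - ε) • p i) +ᵥ visibleArc (fun k => ε • p k) i ⊆ visibleArc (fun k => ε' • p k) i := by
  rintro _ ⟨x, ⟨hxi, hxj⟩, rfl⟩
  simp only [visibleArc, vadd_eq_add, dist_eq_norm] at hxi hxj ⊢
  have hshift (j : Fin n) :
      (ε' - ε) • p i + x - ε' • p j = (x - ε • p i) + ε' • (p i - p j) := by
    module
  refine ⟨by rwa [hshift, sub_self, smul_zero, add_zero], fun j hj => ?_⟩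
  have hxj' : 1 ≤ ‖(x - ε • p i) + ε • (p i - p j)‖ := by
    rw [show (x - ε • p i) + ε • (p i - p j) = x - ε • p j by module]
    exact hxj j hj
  rw [hshift]
  exact hxj'.trans (norm_add_smul_le_norm_add_smul_of_norm_le _ _ hε hεε' (hxi ▸ hxj'))

theorem visible_perimeter_monotone_in_scaling_general {n : ℕ} (p : Fin n → Pt)
    (ε ε' : ℝ) (hε : 0 < ε) (hεε' : ε ≤ ε') :
    vis (fun i => ε • p i) ≤ vis (fun i => ε' • p i) := by
  rw [vis_eq_sum_visibleArc, vis_eq_sum_visibleArc]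
  refine Finset.sum_le_sum fun i _ => ?_
  calc μH[1] (visibleArc (fun k => ε • p k) i)
      = μH[1] (((ε' - ε) • p i) +ᵥ visibleArc (fun k => ε • p k) i) :=
        (hausdorffMeasure_vadd _ (Or.inl zero_le_one) _).symm
    _ ≤ μH[1] (visibleArc (fun k => ε' • p k) i) :=
        measure_mono (vadd_visibleArc_smul_subset p i hε hεε')

/-- monotonicity of the visible perimeter under scaling. -/
theorem visible_perimeter_monotone_in_scaling {n : ℕ} (p : Fin n → Pt)
    (hp : Function.Injective p) (ε ε' : ℝ) (hε : 0 < ε) (hεε' : ε ≤ ε') :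
    vis (fun i => ε • p i) ≤ vis (fun i => ε' • p i) :=
  visible_perimeter_monotone_in_scaling_general p ε ε' hε hεε'
end
end

section
/- For every finite set of distinct points p_1, …, p_n in ℝ² with a fixed stacking order, the visible perimeter of the configuration scaled by ε tends, as ε → 0⁺, to the sum ∑_{i=1}^n τ_i of the external angles; that is, vis(εp_1, …, εp_n) → ∑_{i=1}^n τ_i as ε → 0⁺. -/
open MeasureTheory Filter Set Metric
open scoped ENNReal NNReal Topology

noncomputable section

/-!
Translating by `-ε • p i` turns the visible arc of the `i`-th disk of `ε • p` into the set of unit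
vectors `u` with `2 ⟪u, p i - p j⟫ + ε ‖p i - p j‖² ≥ 0` for all `j < i`. As `ε ↓ 0` these sets
decrease to the closed cone of directions with `⟪u, p i - p j⟫ ≥ 0`, so their lengths converge by
continuity of measure from above. This closed cone differs from the open one, whose length is `τ_i`,
by finitely many unit vectors orthogonal to some `p i - p j`; and the open cone is empty when `p i`
lies in the hull of the earlier points. The analytic input is that the unit circle has length `2π`,
which follows by comparing it with inscribed regular polygons.
-/

open Module
open scoped RealInnerProductSpace

theorem ofReal_dist_le_hausdorffMeasure {X : Type*} [MetricSpace X] [MeasurableSpace X]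
    [BorelSpace X] {A : Set X} (hA : IsPreconnected A) {x y : X} (hx : x ∈ A) (hy : y ∈ A) :
    ENNReal.ofReal (dist x y) ≤ μH[1] A := by
  have hf : LipschitzWith 1 (dist x) := LipschitzWith.dist_right x
  have hIcc : Icc 0 (dist x y) ⊆ dist x '' A :=
    (hA.image _ hf.continuous.continuousOn).Icc_subset ⟨x, hx, dist_self x⟩ ⟨y, hy, rfl⟩
  calc ENNReal.ofReal (dist x y) = μH[1] (Icc 0 (dist x y)) := by
        rw [hausdorffMeasure_real, Real.volume_Icc, sub_zero]
    _ ≤ μH[1] (dist x '' A) := measure_mono hIcc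
    _ ≤ μH[1] A := by simpa using hf.hausdorffMeasure_image_le zero_le_one A

namespace Complex

open Real

theorem dist_exp_mul_I (a b : ℝ) :
    dist (exp (a * I)) (exp (b * I)) = 2 * |Real.sin ((a - b) / 2)| := by
  have h : exp (a * I) - exp (b * I) = exp (b * I) * (exp (I * ↑(a - b)) - 1) := by
    rw [mul_sub, ← exp_add, ofReal_sub]; ring_nf
  rw [dist_eq_norm, h, norm_mul, norm_exp_ofReal_mul_I, one_mul,
    norm_exp_I_mul_ofReal_sub_one, norm_mul, Real.norm_two, Real.norm_eq_abs]

theorem lipschitzWith_exp_mul_I : LipschitzWith 1 fun θ : ℝ ↦ exp (θ * I) := by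
  refine LipschitzWith.of_dist_le_mul fun a b ↦ ?_
  rw [dist_exp_mul_I, NNReal.coe_one, one_mul, Real.dist_eq]
  calc 2 * |Real.sin ((a - b) / 2)| ≤ 2 * |(a - b) / 2| :=
        mul_le_mul_of_nonneg_left abs_sin_le_abs zero_le_two
    _ = |a - b| := by rw [abs_div, abs_two]; ring

theorem arg_exp_mul_I_of_mem {θ : ℝ} (hθ : θ ∈ Ioc (-π) π) : arg (exp (θ * I)) = θ := by
  rw [exp_mul_I, arg_cos_add_sin_mul_I hθ]

theorem sphere_subset_image_exp_mul_I :
    sphere (0 : ℂ) 1 ⊆ (fun θ : ℝ ↦ exp (θ * I)) '' Ioc (-π) π := by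
  intro z hz
  rw [mem_sphere_zero_iff_norm] at hz
  exact ⟨arg z, ⟨neg_pi_lt_arg z, arg_le_pi z⟩, by simpa [hz] using norm_mul_exp_arg_mul_I z⟩

theorem hausdorffMeasure_sphere_le : μH[1] (sphere (0 : ℂ) 1) ≤ ENNReal.ofReal (2 * π) :=
  calc μH[1] (sphere (0 : ℂ) 1) ≤ μH[1] ((fun θ : ℝ ↦ exp (θ * I)) '' Ioc (-π) π) :=
        measure_mono sphere_subset_image_exp_mul_I
    _ ≤ μH[1] (Ioc (-π) π) :=
        (lipschitzWith_exp_mul_I.hausdorffMeasure_image_le zero_le_one _).trans_eq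
          (by rw [ENNReal.coe_one, ENNReal.one_rpow, one_mul])
    _ = ENNReal.ofReal (2 * π) := by rw [hausdorffMeasure_real, Real.volume_Ioc]; ring_nf

theorem ofReal_dist_le_hausdorffMeasure_arc {a b : ℝ} (ha : -π ≤ a) (hab : a ≤ b) (hb : b ≤ π) :
    ENNReal.ofReal (dist (exp (a * I)) (exp (b * I))) ≤
      μH[1] {z ∈ sphere (0 : ℂ) 1 | arg z ∈ Ioc a b} := by
  have : NullSingletonClass (μH[1] : Measure ℂ) := Measure.nullSingletonClass_hausdorff ℂ one_pos
  have hsub : (fun θ : ℝ ↦ exp (θ * I)) '' Icc a b ⊆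
      insert (exp (a * I)) {z ∈ sphere (0 : ℂ) 1 | arg z ∈ Ioc a b} := by
    rintro _ ⟨θ, hθ, rfl⟩
    rcases hθ.1.eq_or_lt with rfl | haθ
    · exact mem_insert _ _
    · refine mem_insert_of_mem _ ⟨by simp, ?_⟩
      rw [arg_exp_mul_I_of_mem ⟨by linarith, hθ.2.trans hb⟩]
      exact ⟨haθ, hθ.2⟩
  calc ENNReal.ofReal (dist (exp (a * I)) (exp (b * I)))
      ≤ μH[1] ((fun θ : ℝ ↦ exp (θ * I)) '' Icc a b) :=
        ofReal_dist_le_hausdorffMeasure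
          (isPreconnected_Icc.image _ lipschitzWith_exp_mul_I.continuous.continuousOn)
          ⟨a, left_mem_Icc.2 hab, rfl⟩ ⟨b, right_mem_Icc.2 hab, rfl⟩
    _ ≤ _ := (measure_mono hsub).trans_eq (measure_congr (insert_ae_eq_self _ _))

theorem ofReal_mul_sin_le_hausdorffMeasure_sphere {N : ℕ} (hN : 0 < N) :
    ENNReal.ofReal (N * (2 * Real.sin (π / N))) ≤ μH[1] (sphere (0 : ℂ) 1) := by
  set θ : ℕ → ℝ := fun k ↦ -π + 2 * π / N * k with hθ
  have hθ_mono : Monotone θ := fun k l hkl ↦ by simp only [hθ]; gcongr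
  have hθ0 : θ 0 = -π := by simp [hθ]
  have hθN : θ N = π := by simp only [hθ]; field_simp; ring
  have hchord : ∀ k, dist (exp (θ k * I)) (exp (θ (k + 1) * I)) = 2 * Real.sin (π / N) := by
    intro k
    have : (θ k - θ (k + 1)) / 2 = -(π / N) := by simp only [hθ]; push_cast; ring
    rw [dist_exp_mul_I, this, Real.sin_neg, abs_neg,
      abs_of_nonneg (sin_nonneg_of_nonneg_of_le_pi (by positivity) (div_le_self pi_pos.le
        (by exact_mod_cast hN)))]
  -- Cutting the arcs out with `arg` makes them measurable and pairwise disjoint for free.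
  set A : ℕ → Set ℂ := fun k ↦ {z ∈ sphere (0 : ℂ) 1 | arg z ∈ Ioc (θ k) (θ (k + 1))}
  have hA_meas : ∀ k, MeasurableSet (A k) := fun k ↦
    isClosed_sphere.measurableSet.inter (measurable_arg measurableSet_Ioc)
  have hA_disj : Pairwise (Function.onFun Disjoint A) := fun k l hkl ↦
    ((hθ_mono.pairwise_disjoint_on_Ioc_succ hkl).preimage arg).mono inf_le_right inf_le_right
  calc ENNReal.ofReal (N * (2 * Real.sin (π / N)))
      = ∑ k ∈ Finset.range N, ENNReal.ofReal (dist (exp (θ k * I)) (exp (θ (k + 1) * I))) := by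
        simp [hchord, ENNReal.ofReal_mul]
    _ ≤ ∑ k ∈ Finset.range N, μH[1] (A k) := by
        refine Finset.sum_le_sum fun k hk ↦ ofReal_dist_le_hausdorffMeasure_arc
          (hθ0 ▸ hθ_mono k.zero_le) (hθ_mono k.le_succ)
          (hθN ▸ hθ_mono (Finset.mem_range.1 hk))
    _ = μH[1] (⋃ k ∈ Finset.range N, A k) :=
        (measure_biUnion_finset (fun k _ l _ hkl ↦ hA_disj hkl) fun k _ ↦ hA_meas k).symm
    _ ≤ μH[1] (sphere (0 : ℂ) 1) := measure_mono (iUnion₂_subset fun k _ ↦ inter_subset_left)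

theorem hausdorffMeasure_sphere : μH[1] (sphere (0 : ℂ) 1) = ENNReal.ofReal (2 * π) := by
  refine le_antisymm hausdorffMeasure_sphere_le (le_of_tendsto ?_
    ((eventually_gt_atTop 0).mono fun N hN ↦ ofReal_mul_sin_le_hausdorffMeasure_sphere hN))
  have hsinc : Tendsto (fun N : ℕ ↦ 2 * π * sinc (π / N)) atTop (𝓝 (2 * π)) := by
    simpa using ((continuous_sinc.tendsto 0).comp
      (tendsto_const_div_atTop_nhds_zero_nat π)).const_mul (2 * π)
  refine ENNReal.tendsto_ofReal (hsinc.congr' ?_)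
  filter_upwards [eventually_gt_atTop 0] with N hN
  have hN' : (N : ℝ) ≠ 0 := Nat.cast_ne_zero.2 hN.ne'
  rw [sinc_of_ne_zero (div_ne_zero pi_ne_zero hN')]
  field_simp

end Complex

section TwoDim

variable {E : Type*} [NormedAddCommGroup E] [InnerProductSpace ℝ E] [MeasurableSpace E]
  [BorelSpace E]

theorem hausdorffMeasure_sphere_of_finrank_eq_two (h : finrank ℝ E = 2) :
    μH[1] (sphere (0 : E) 1) = ENNReal.ofReal (2 * Real.pi) := by
  have : FiniteDimensional ℝ E := Module.finite_of_finrank_eq_succ h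
  let e : E ≃ₗᵢ[ℝ] ℂ := ((stdOrthonormalBasis ℝ E).reindex (finCongr h)).repr.trans
    Complex.orthonormalBasisOneI.repr.symm
  rw [← Complex.hausdorffMeasure_sphere, ← e.toIsometryEquiv.hausdorffMeasure_image]
  congr 1
  simp

theorem hausdorffMeasure_sphere_inter_orthogonal_eq_zero (h : finrank ℝ E = 2) {v : E}
    (hv : v ≠ 0) :
    μH[1] {u : E | ‖u‖ = 1 ∧ ⟪u, v⟫ = 0} = 0 := by
  have : Fact (finrank ℝ E = 1 + 1) := ⟨h⟩
  have : NullSingletonClass (μH[1] : Measure E) := Measure.nullSingletonClass_hausdorff E one_pos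
  obtain ⟨w, hw, hspan⟩ :=
    finrank_eq_one_iff'.1 (Submodule.finrank_orthogonal_span_singleton (𝕜 := ℝ) hv)
  set a : E := ‖(w : E)‖⁻¹ • (w : E)
  refine measure_mono_null (t := {a, -a}) ?_ ((toFinite _).measure_zero _)
  rintro u ⟨hu, huv⟩
  obtain ⟨c, hc⟩ := hspan ⟨u, Submodule.mem_orthogonal_singleton_iff_inner_right.2
    (by rwa [real_inner_comm])⟩
  have hcu : c • (w : E) = u := congrArg Subtype.val hc
  have hc_abs : |c| = ‖(w : E)‖⁻¹ := by
    rw [← hcu, norm_smul, Real.norm_eq_abs] at hu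
    exact eq_inv_of_mul_eq_one_left hu
  rcases abs_eq (inv_nonneg.2 (norm_nonneg _)) |>.1 hc_abs with rfl | rfl
  · exact Or.inl hcu.symm
  · exact Or.inr (by rw [← hcu, neg_smul]; rfl)

end TwoDim

theorem one_le_norm_add_smul_iff {F : Type*} [NormedAddCommGroup F] [InnerProductSpace ℝ F]
    {u d : F} (hu : ‖u‖ = 1) {ε : ℝ} (hε : 0 < ε) :
    1 ≤ ‖u + ε • d‖ ↔ 0 ≤ 2 * ⟪u, d⟫ + ε * ‖d‖ ^ 2 := by
  have h : ‖u + ε • d‖ ^ 2 = 1 + ε * (2 * ⟪u, d⟫ + ε * ‖d‖ ^ 2) := by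
    rw [norm_add_sq_real, hu, real_inner_smul_right, norm_smul, mul_pow, Real.norm_eq_abs, sq_abs]
    ring
  rw [← pow_le_pow_iff_left₀ zero_le_one (norm_nonneg _) two_ne_zero, one_pow, h,
    le_add_iff_nonneg_right, mul_nonneg_iff_of_pos_left hε]

section Configuration

variable {n : ℕ} (p : Fin n → Pt) (i : Fin n)

def visibleDirections (ε : ℝ) : Set Pt :=
  {u | ‖u‖ = 1 ∧ ∀ j < i, 0 ≤ 2 * ⟪u, p i - p j⟫ + ε * ‖p i - p j‖ ^ 2}

def exposedDirections : Set Pt :=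
  {u | ‖u‖ = 1 ∧ ∀ j < i, ⟪u, p j⟫ < ⟪u, p i⟫}

theorem visibleArc_eq_preimage {ε : ℝ} (hε : 0 < ε) :
    {x : Pt | dist x (ε • p i) = 1 ∧ ∀ j < i, 1 ≤ dist x (ε • p j)} =
      (· - ε • p i) ⁻¹' visibleDirections p i ε := by
  ext x
  have hsub : ∀ j, x - ε • p j = (x - ε • p i) + ε • (p i - p j) := fun j ↦ by
    rw [smul_sub]; abel
  simp only [mem_ofPred_eq, mem_preimage, visibleDirections, dist_eq_norm]
  refine and_congr_right fun hx ↦ forall₂_congr fun j _ ↦ ?_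
  rw [hsub j, one_le_norm_add_smul_iff hx hε]

theorem hausdorffMeasure_visibleArc {ε : ℝ} (hε : 0 < ε) :
    μH[1] {x : Pt | dist x (ε • p i) = 1 ∧ ∀ j < i, 1 ≤ dist x (ε • p j)} =
      μH[1] (visibleDirections p i ε) := by
  rw [visibleArc_eq_preimage p i hε]
  exact (IsometryEquiv.subRight _).hausdorffMeasure_preimage _ _

theorem monotone_visibleDirections : Monotone (visibleDirections p i) :=
  fun _ _ hεδ _ hu ↦ ⟨hu.1, fun j hj ↦ (hu.2 j hj).trans (by gcongr)⟩

theorem isClosed_visibleDirections (ε : ℝ) : IsClosed (visibleDirections p i ε) := by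
  simp only [visibleDirections, ofPred_and, ofPred_forall]
  exact (isClosed_eq continuous_norm continuous_const).inter
    (isClosed_iInter fun j ↦ isClosed_iInter fun _ ↦ isClosed_le continuous_const (by fun_prop))

theorem biInter_visibleDirections : ⋂ ε > 0, visibleDirections p i ε = visibleDirections p i 0 := by
  refine Subset.antisymm (fun u hu ↦ ?_)
    (subset_iInter₂ fun ε hε ↦ monotone_visibleDirections p i hε.le)
  rw [mem_iInter₂] at hu
  refine ⟨(hu 1 one_pos).1, fun j hj ↦ ?_⟩
  have hlim : Tendsto (fun ε : ℝ ↦ 2 * ⟪u, p i - p j⟫ + ε * ‖p i - p j‖ ^ 2) (𝓝[>] 0)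
      (𝓝 (2 * ⟪u, p i - p j⟫ + 0 * ‖p i - p j‖ ^ 2)) :=
    ((continuous_const.add (continuous_id.mul continuous_const)).tendsto 0).mono_left
      nhdsWithin_le_nhds
  exact ge_of_tendsto hlim (eventually_nhdsWithin_of_forall fun ε hε ↦ (hu ε hε).2 j hj)

theorem visibleDirections_subset_sphere (ε : ℝ) : visibleDirections p i ε ⊆ sphere 0 1 :=
  fun _ hu ↦ mem_sphere_zero_iff_norm.2 hu.1

theorem tendsto_hausdorffMeasure_visibleDirections :
    Tendsto (fun ε ↦ μH[1] (visibleDirections p i ε)) (𝓝[>] 0)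
      (𝓝 (μH[1] (visibleDirections p i 0))) := by
  have hfin : μH[1] (visibleDirections p i 1) ≠ ⊤ :=
    ne_top_of_le_ne_top
      ((hausdorffMeasure_sphere_of_finrank_eq_two finrank_euclideanSpace_fin).trans_ne
        ENNReal.ofReal_ne_top)
      (measure_mono (visibleDirections_subset_sphere p i 1))
  rw [← biInter_visibleDirections]
  exact tendsto_measure_biInter_gt
    (fun ε _ ↦ (isClosed_visibleDirections p i ε).measurableSet.nullMeasurableSet)
    (fun _ _ _ h ↦ monotone_visibleDirections p i h) ⟨1, one_pos, hfin⟩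

theorem exposedDirections_subset_visibleDirections_zero :
    exposedDirections p i ⊆ visibleDirections p i 0 := fun u hu ↦
  ⟨hu.1, fun j hj ↦ by rw [zero_mul, add_zero, inner_sub_right]; linarith [hu.2 j hj]⟩

theorem visibleDirections_zero_diff_exposedDirections_subset :
    visibleDirections p i 0 \ exposedDirections p i ⊆
      ⋃ j < i, {u : Pt | ‖u‖ = 1 ∧ ⟪u, p i - p j⟫ = 0} := by
  rintro u ⟨⟨hu, hvis⟩, hexp⟩
  simp only [exposedDirections, mem_ofPred_eq, not_and, not_forall, not_lt] at hexp
  obtain ⟨j, hj, hle⟩ := hexp hu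
  have := hvis j hj
  rw [zero_mul, add_zero, inner_sub_right] at this
  exact mem_iUnion₂.2 ⟨j, hj, hu, by rw [inner_sub_right]; linarith⟩

variable {p} in
theorem hausdorffMeasure_visibleDirections_zero (hp : Function.Injective p) :
    μH[1] (visibleDirections p i 0) = μH[1] (exposedDirections p i) := by
  have hnull : μH[1] (⋃ j < i, {u : Pt | ‖u‖ = 1 ∧ ⟪u, p i - p j⟫ = 0}) = 0 :=
    (measure_biUnion_null_iff (to_countable _)).2 fun j hj ↦
      hausdorffMeasure_sphere_inter_orthogonal_eq_zero finrank_euclideanSpace_fin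
        (sub_ne_zero.2 (hp.ne (ne_of_gt hj)))
  refine le_antisymm ?_ (measure_mono (exposedDirections_subset_visibleDirections_zero p i))
  calc μH[1] (visibleDirections p i 0)
      ≤ μH[1] (exposedDirections p i ∪ ⋃ j < i, {u : Pt | ‖u‖ = 1 ∧ ⟪u, p i - p j⟫ = 0}) :=
        measure_mono fun u hu ↦ or_iff_not_imp_left.2 fun hexp ↦
          visibleDirections_zero_diff_exposedDirections_subset p i ⟨hu, hexp⟩
    _ ≤ μH[1] (exposedDirections p i) := (measure_union_le _ _).trans_eq (by rw [hnull, add_zero])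

theorem exposedDirections_eq_empty_of_mem_convexHull
    (h : p i ∈ convexHull ℝ (p '' {j | j < i})) : exposedDirections p i = ∅ := by
  refine eq_empty_of_forall_notMem fun u ⟨_, hu⟩ ↦ ?_
  have : convexHull ℝ (p '' {j | j < i}) ⊆ {y | ⟪u, y⟫ < ⟪u, p i⟫} :=
    convexHull_min (by rintro _ ⟨j, hj, rfl⟩; exact hu j hj)
      (convex_halfSpace_lt (innerₛₗ ℝ u).isLinear _)
  exact lt_irrefl _ (this h).out

theorem extAngle_eq_hausdorffMeasure_exposedDirections :
    extAngle p i = μH[1] (exposedDirections p i) := by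
  unfold extAngle
  split_ifs with h0 hhull
  · have : exposedDirections p i = sphere 0 1 := by
      ext u
      simp [exposedDirections, Fin.lt_def, h0]
    rw [this, hausdorffMeasure_sphere_of_finrank_eq_two finrank_euclideanSpace_fin]
  · rw [exposedDirections_eq_empty_of_mem_convexHull p i hhull, measure_empty]
  · rfl

end Configuration

/-- `vis(εp) → ∑ τ_i` as `ε → 0⁺`. -/
theorem tendsto_vis_scaled_extAngles {n : ℕ} (p : Fin n → Pt) (hp : Function.Injective p) :
    Filter.Tendsto (fun ε : ℝ => vis (fun i => ε • p i)) (𝓝[>] (0 : ℝ))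
      (𝓝 (∑ i : Fin n, extAngle p i)) := by
  simp only [vis]
  refine tendsto_finsetSum _ fun i _ ↦ ?_
  rw [extAngle_eq_hausdorffMeasure_exposedDirections,
    ← hausdorffMeasure_visibleDirections_zero i hp]
  refine (tendsto_hausdorffMeasure_visibleDirections p i).congr' ?_
  filter_upwards [self_mem_nhdsWithin] with ε hε
  exact (hausdorffMeasure_visibleArc p i hε).symm
end
end

section
/- For every real C > 0 there exists a real C' > 0 with the following property: for every n ≥ 2 and every C-dense set of n distinct points p_1, …, p_n in ℝ² (listed in any stacking order), one has limsup_{ε→0⁺} vis(εp_1, …, εp_n) ≤ C' · n^{3/4}. -/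
open MeasureTheory Filter Set Metric
open scoped ENNReal NNReal Topology

noncomputable section

/-!
A point `εpᵢ + u` of the `i`-th unit circle is visible iff
`‖u + ε(pᵢ - pⱼ)‖ ≥ 1`, i.e. `⟪u, pᵢ - pⱼ⟫ ≥ -ε‖pᵢ - pⱼ‖²/2`, for all `j < i`. As `ε → 0⁺`
these arcs decrease to the arcs `{u | ⟪u, pᵢ - pⱼ⟫ ≥ 0 for all j < i}`, of lengths `τᵢ`, so the
limsup is at most `∑ τᵢ`. For `i > 0` the arc of length `τᵢ` lies in a half circle, hence on
its middle half `⟪u, pᵢ - pⱼ⟫ ≥ δτᵢ/(2π)` for all `j < i`, where `δ` is the minimal distance.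
Take `m ≈ n^{1/4}` equally spaced directions. If `τᵢ ≥ 4π/m`, one of them, `u`, lies in that
middle half, and then `pᵢ` raises `max_{j ≤ i} ⟪u, pⱼ⟫` by at least `δτᵢ/(2π)`; so for each
direction these `τᵢ` add up to at most `2π · diam/δ ≤ 2πC√n`. The other `τᵢ` add up to at most
`4πn/m`, and `τ₀ = 2π`.
-/

open Real
open scoped RealInnerProductSpace

def unitVec (t : ℝ) : Pt := Complex.orthonormalBasisOneI.repr (circleMap 0 1 t)

@[simp] lemma unitVec_apply_zero (t : ℝ) : unitVec t 0 = cos t := by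
  simp [unitVec, circleMap, Complex.exp_ofReal_mul_I_re]

@[simp] lemma unitVec_apply_one (t : ℝ) : unitVec t 1 = sin t := by
  simp [unitVec, circleMap, Complex.exp_ofReal_mul_I_im]

lemma norm_unitVec (t : ℝ) : ‖unitVec t‖ = 1 := by
  simp [unitVec, norm_circleMap_zero]

lemma lipschitzWith_unitVec : LipschitzWith 1 unitVec := by
  have h := Complex.orthonormalBasisOneI.repr.lipschitz.comp (lipschitzWith_circleMap 0 1)
  rwa [Real.nnabs_of_nonneg zero_le_one, Real.toNNReal_one, one_mul] at h

lemma unitVec_periodic : Function.Periodic unitVec (2 * π) := fun t => by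
  simp [unitVec, periodic_circleMap 0 1 t]

lemma inner_unitVec_unitVec (s t : ℝ) : ⟪unitVec s, unitVec t⟫ = cos (s - t) := by
  simp [PiLp.inner_apply, Fin.sum_univ_two, cos_sub]
  ring

def polarAngle (v : Pt) : ℝ := Complex.arg (Complex.orthonormalBasisOneI.repr.symm v)

lemma norm_smul_unitVec_polarAngle (v : Pt) : ‖v‖ • unitVec (polarAngle v) = v := by
  set z := Complex.orthonormalBasisOneI.repr.symm v
  have hz : ‖z‖ = ‖v‖ := LinearIsometryEquiv.norm_map _ v
  rw [← hz, unitVec, ← LinearIsometryEquiv.map_smul, polarAngle, circleMap_zero,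
    Complex.ofReal_one, one_mul, Complex.real_smul, Complex.norm_mul_exp_arg_mul_I]
  exact LinearIsometryEquiv.apply_symm_apply _ v

lemma inner_unitVec_eq_norm_mul_cos (t : ℝ) (v : Pt) :
    ⟪unitVec t, v⟫ = ‖v‖ * cos (t - polarAngle v) := by
  conv_lhs => rw [← norm_smul_unitVec_polarAngle v]
  rw [real_inner_smul_right, inner_unitVec_unitVec]

lemma exists_mem_Icc_unitVec_add_eq (φ : ℝ) {x : Pt} (hx : ‖x‖ = 1) :
    ∃ t ∈ Icc (-π) π, unitVec (t + φ) = x := by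
  have hx' : unitVec (polarAngle x) = x := by
    simpa [hx] using norm_smul_unitVec_polarAngle x
  refine ⟨toIocMod two_pi_pos (-π) (polarAngle x - φ), ?_, ?_⟩
  · have h := toIocMod_mem_Ioc two_pi_pos (-π) (polarAngle x - φ)
    exact ⟨h.1.le, by linarith [h.2]⟩
  · rw [← self_sub_toIocDiv_zsmul, sub_right_comm, sub_add_cancel,
      unitVec_periodic.sub_zsmul_eq, hx']

lemma exists_mem_Icc_unitVec_eq_grid {m : ℕ} (hm : 0 < m) (a : ℝ) :
    ∃ k ∈ Finset.Ico (0 : ℤ) m, ∃ s ∈ Icc a (a + 2 * π / m),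
      unitVec s = unitVec (2 * π * k / m) := by
  have hθ : 0 < 2 * π / m := by positivity
  set k' := ⌈a / (2 * π / m)⌉
  have hm' : (0 : ℤ) < m := by exact_mod_cast hm
  refine ⟨k' % m, Finset.mem_Ico.mpr ⟨Int.emod_nonneg _ hm'.ne', Int.emod_lt_of_pos _ hm'⟩,
    k' * (2 * π / m), ⟨?_, ?_⟩, ?_⟩
  · exact (div_le_iff₀ hθ).mp (Int.le_ceil _)
  · have h := mul_lt_mul_of_pos_right (Int.ceil_lt_add_one (a / (2 * π / m))) hθ
    rw [add_mul, div_mul_cancel₀ _ hθ.ne', one_mul] at h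
    exact h.le
  · have hk' : (k' : ℝ) = (k' % m : ℤ) + (k' / m : ℤ) * m := by
      exact_mod_cast (Int.emod_add_ediv_mul k' m).symm
    rw [hk', show ((k' % m : ℤ) + (k' / m : ℤ) * m : ℝ) * (2 * π / m)
      = 2 * π * (k' % m : ℤ) / m + (k' / m : ℤ) * (2 * π) by field_simp,
      (unitVec_periodic.int_mul _) _]

lemma abs_le_pi_div_two_of_cos_nonneg {t : ℝ} (ht : |t| ≤ π) (hc : 0 ≤ cos t) :
    |t| ≤ π / 2 := by
  by_contra h
  have := cos_neg_of_pi_div_two_lt_of_lt (not_le.mp h) (by linarith [pi_pos])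
  rw [cos_abs] at this
  linarith

lemma sin_min_le_cos_of_abs_le {a b c s : ℝ} (ha : |a| ≤ π) (hca : 0 ≤ cos a)
    (hcb : 0 ≤ cos b) (hcc : 0 ≤ cos c) (hac : a < c) (hcb' : c < b) (hab : b - a ≤ π)
    (hs : s ∈ Icc a b) : sin (min (s - a) (b - s)) ≤ cos s := by
  have ha' := abs_le.mp (abs_le_pi_div_two_of_cos_nonneg ha hca)
  -- `c` rules out the arc `[π/2, 3π/2]`, on whose interior `cos` is negative.
  have hb : b ≤ π / 2 := by
    by_contra hb
    rcases le_or_gt c (π / 2) with hc | hc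
    · exact (cos_neg_of_pi_div_two_lt_of_lt (not_le.mp hb) (by linarith)).not_ge hcb
    · exact (cos_neg_of_pi_div_two_lt_of_lt hc (by linarith)).not_ge hcc
  have hm0 : 0 ≤ min (s - a) (b - s) := le_min (by linarith [hs.1]) (by linarith [hs.2])
  have hm : min (s - a) (b - s) ≤ π / 2 := by
    rcases min_cases (s - a) (b - s) with h | h <;> linarith [hs.1, hs.2]
  have hs' : |s| ≤ π / 2 - min (s - a) (b - s) := abs_le.mpr
    ⟨by linarith [min_le_left (s - a) (b - s)], by linarith [min_le_right (s - a) (b - s)]⟩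
  rw [← cos_pi_div_two_sub, ← cos_abs s]
  exact cos_le_cos_of_nonneg_of_le_pi (abs_nonneg s) (by linarith [pi_pos]) hs'

lemma sin_min_le_cos {a b c s : ℝ} (hca : 0 ≤ cos a) (hcb : 0 ≤ cos b) (hcc : 0 ≤ cos c)
    (hac : a < c) (hcb' : c < b) (hab : b - a ≤ π) (hs : s ∈ Icc a b) :
    sin (min (s - a) (b - s)) ≤ cos s := by
  set k := toIocDiv two_pi_pos (-π) a
  have hshift : ∀ x, cos (x - k • (2 * π)) = cos x := fun _ => cos_periodic.sub_zsmul_eq k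
  have ha : |a - k • (2 * π)| ≤ π := by
    have h := toIocMod_mem_Ioc two_pi_pos (-π) a
    rw [← self_sub_toIocDiv_zsmul] at h
    exact abs_le.mpr ⟨h.1.le, by linarith [h.2]⟩
  have h := sin_min_le_cos_of_abs_le (s := s - k • (2 * π)) ha ((hshift a).symm ▸ hca)
    ((hshift b).symm ▸ hcb) ((hshift c).symm ▸ hcc) (by linarith) (by linarith) (by linarith)
    ⟨by linarith [hs.1], by linarith [hs.2]⟩
  simpa only [sub_sub_sub_cancel_right, hshift] using h

lemma neg_mul_norm_sq_div_two_le_inner {E : Type*} [NormedAddCommGroup E]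
    [InnerProductSpace ℝ E] {u v : E} {ε : ℝ} (hu : ‖u‖ = 1) (hε : 0 < ε)
    (h : 1 ≤ ‖u + ε • v‖) : -(ε * ‖v‖ ^ 2 / 2) ≤ ⟪u, v⟫ := by
  have h2 : 1 ≤ ‖u + ε • v‖ ^ 2 := one_le_pow₀ h
  rw [norm_add_sq_real, hu, real_inner_smul_right, norm_smul, Real.norm_of_nonneg hε.le] at h2
  nlinarith

/-- For `ε > 0` and `v = pᵢ - pⱼ`, the condition on `t` says that `εpᵢ + unitVec (t + φ)` is
not in the open unit disk around `εpⱼ` (`neg_mul_norm_sq_div_two_le_inner`); the shift `φ`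
lets the window `[-π, π]` be centred anywhere. -/
def angleSet (V : Set Pt) (φ ε : ℝ) : Set ℝ :=
  Icc (-π) π ∩ ⋂ v ∈ V, {t | -(ε * ‖v‖ ^ 2 / 2) ≤ ⟪unitVec (t + φ), v⟫}

section angleSet

variable {V : Set Pt} {φ ε t : ℝ}

lemma mem_angleSet : t ∈ angleSet V φ ε ↔
    t ∈ Icc (-π) π ∧ ∀ v ∈ V, -(ε * ‖v‖ ^ 2 / 2) ≤ ⟪unitVec (t + φ), v⟫ := by
  simp [angleSet]

lemma isClosed_angleSet : IsClosed (angleSet V φ ε) :=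
  isClosed_Icc.inter <| isClosed_biInter fun _ _ => isClosed_le continuous_const <|
    (lipschitzWith_unitVec.continuous.comp (continuous_add_const φ)).inner continuous_const

lemma angleSet_mono {ε' : ℝ} (h : ε ≤ ε') : angleSet V φ ε ⊆ angleSet V φ ε' := by
  intro t ht
  rw [mem_angleSet] at ht ⊢
  refine ⟨ht.1, fun v hv => le_trans ?_ (ht.2 v hv)⟩
  have := sq_nonneg ‖v‖
  nlinarith

lemma volume_angleSet_le : volume (angleSet V φ ε) ≤ ENNReal.ofReal (2 * π) := by
  calc volume (angleSet V φ ε) ≤ volume (Icc (-π) π) := measure_mono inter_subset_left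
    _ = ENNReal.ofReal (2 * π) := by rw [Real.volume_Icc]; ring_nf

lemma biInter_angleSet : ⋂ ε > 0, angleSet V φ ε = angleSet V φ 0 := by
  refine Subset.antisymm (fun t ht => ?_) (subset_iInter₂ fun ε hε => angleSet_mono hε.le)
  have ht' : ∀ ε > 0, t ∈ angleSet V φ ε := mem_iInter₂.mp ht
  refine mem_angleSet.mpr ⟨(mem_angleSet.mp (ht' 1 one_pos)).1, fun v hv => ?_⟩
  have hlim : Tendsto (fun ε : ℝ => -(ε * ‖v‖ ^ 2 / 2)) (𝓝[>] 0) (𝓝 (-(0 * ‖v‖ ^ 2 / 2))) :=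
    (Continuous.tendsto (by fun_prop) 0).mono_left nhdsWithin_le_nhds
  exact le_of_tendsto hlim (eventually_nhdsWithin_of_forall fun ε hε =>
    (mem_angleSet.mp (ht' ε hε)).2 v hv)

lemma tendsto_volume_angleSet :
    Tendsto (fun ε => volume (angleSet V φ ε)) (𝓝[>] 0) (𝓝 (volume (angleSet V φ 0))) := by
  rw [← biInter_angleSet]
  exact tendsto_measure_biInter_gt (fun _ _ => isClosed_angleSet.nullMeasurableSet)
    (fun _ _ _ h => angleSet_mono h)
    ⟨1, one_pos, (volume_angleSet_le.trans_lt ENNReal.ofReal_lt_top).ne⟩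

lemma hausdorffMeasure_le_volume_angleSet (hε : 0 < ε) (c : Pt) :
    μH[1] {x | dist x c = 1 ∧ ∀ v ∈ V, 1 ≤ dist x (c - ε • v)} ≤
      volume (angleSet V φ ε) := by
  have hsub : {x | dist x c = 1 ∧ ∀ v ∈ V, 1 ≤ dist x (c - ε • v)} ⊆
      (fun t => c + unitVec (t + φ)) '' angleSet V φ ε := by
    rintro x ⟨hxc, hxV⟩
    rw [dist_eq_norm] at hxc
    obtain ⟨t, ht, hxt⟩ := exists_mem_Icc_unitVec_add_eq φ hxc
    refine ⟨t, mem_angleSet.mpr ⟨ht, fun v hv => ?_⟩, by simp [hxt]⟩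
    refine neg_mul_norm_sq_div_two_le_inner (norm_unitVec _) hε ?_
    simpa [hxt, dist_eq_norm, sub_sub_eq_add_sub, add_sub_right_comm] using hxV v hv
  have hlip : LipschitzWith 1 (fun t => c + unitVec (t + φ)) := by
    simpa [Function.comp_def] using
      ((isometry_add_left c).lipschitz.comp lipschitzWith_unitVec).comp
        (isometry_add_right φ).lipschitz
  calc _ ≤ μH[1] ((fun t => c + unitVec (t + φ)) '' angleSet V φ ε) := measure_mono hsub
    _ ≤ μH[1] (angleSet V φ ε) := by simpa using hlip.hausdorffMeasure_image_le zero_le_one _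
    _ = volume (angleSet V φ ε) := by rw [hausdorffMeasure_real]

end angleSet

lemma exists_lt_lt_of_ofReal_le_volume {T : Set ℝ} (hT : IsCompact T) {τ : ℝ} (hτ : 0 < τ)
    (hτT : ENNReal.ofReal τ ≤ volume T) :
    ∃ a ∈ T, ∃ b ∈ T, ∃ c ∈ T, a < c ∧ c < b ∧ τ ≤ b - a := by
  have hT0 : volume T ≠ 0 := (ENNReal.ofReal_pos.mpr hτ).trans_le hτT |>.ne'
  have hne : T.Nonempty := nonempty_of_measure_ne_zero hT0
  have hab : T ⊆ Icc (sInf T) (sSup T) := fun t ht =>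
    ⟨csInf_le hT.bddBelow ht, le_csSup hT.bddAbove ht⟩
  obtain ⟨c, hcT, hc⟩ := Set.not_subset.mp fun h : T ⊆ {sInf T, sSup T} =>
    hT0 (measure_mono_null h ((Set.toFinite _).measure_zero volume))
  refine ⟨sInf T, hT.sInf_mem hne, sSup T, hT.sSup_mem hne, c, hcT, ?_, ?_, ?_⟩
  · exact (hab hcT).1.lt_of_ne fun h => hc (Or.inl h.symm)
  · exact (hab hcT).2.lt_of_ne fun h => hc (Or.inr h)
  · have h := hτT.trans (measure_mono hab)
    rwa [Real.volume_Icc,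
      ENNReal.ofReal_le_ofReal_iff (sub_nonneg.mpr ((hab hcT).1.trans (hab hcT).2))] at h

section deepArc

variable {V : Set Pt} {φ r δ τ : ℝ}

lemma angleSet_zero_subset (hr : 0 < r) (hrV : r • unitVec φ ∈ V) :
    angleSet V φ 0 ⊆ Icc (-(π / 2)) (π / 2) := by
  intro t ht
  obtain ⟨htπ, htV⟩ := mem_angleSet.mp ht
  have hcos : 0 ≤ r * cos t := by
    simpa [real_inner_smul_right, inner_unitVec_unitVec] using htV _ hrV
  exact abs_le.mp <| abs_le_pi_div_two_of_cos_nonneg (abs_le.mpr htπ)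
    (nonneg_of_mul_nonneg_right hcos hr)

lemma exists_forall_Icc_le_inner (hr : 0 < r) (hrV : r • unitVec φ ∈ V) (hδ : 0 < δ)
    (hδV : ∀ v ∈ V, δ ≤ ‖v‖) (hτ : 0 < τ) (hτV : ENNReal.ofReal τ ≤ volume (angleSet V φ 0)) :
    ∃ a, ∀ s ∈ Icc a (a + τ / 2), ∀ v ∈ V, δ * τ / (2 * π) ≤ ⟪unitVec (s + φ), v⟫ := by
  have hW := angleSet_zero_subset hr hrV
  obtain ⟨t₁, h₁, t₂, h₂, t₃, h₃, h₁₃, h₃₂, hτ₁₂⟩ := exists_lt_lt_of_ofReal_le_volume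
    (isCompact_Icc.of_isClosed_subset isClosed_angleSet inter_subset_left) hτ hτV
  have hπ : t₂ - t₁ ≤ π := by linarith [(hW h₁).1, (hW h₂).2]
  refine ⟨t₁ + τ / 4, fun s hs v hv => ?_⟩
  have hv0 : 0 < ‖v‖ := hδ.trans_le (hδV v hv)
  have hcos : ∀ t ∈ angleSet V φ 0, 0 ≤ cos (t + φ - polarAngle v) := fun t ht => by
    have h := (mem_angleSet.mp ht).2 v hv
    rw [inner_unitVec_eq_norm_mul_cos] at h
    exact nonneg_of_mul_nonneg_right (by simpa using h) hv0
  have hsin := sin_min_le_cos (hcos t₁ h₁) (hcos t₂ h₂) (hcos t₃ h₃) (by linarith)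
    (by linarith) (by linarith) (s := s + φ - polarAngle v)
    ⟨by linarith [hs.1], by linarith [hs.2]⟩
  simp only [sub_sub_sub_cancel_right, add_sub_add_right_eq_sub] at hsin
  have hm : τ / 4 ≤ min (s - t₁) (t₂ - s) := le_min (by linarith [hs.1]) (by linarith [hs.2])
  have hm' : min (s - t₁) (t₂ - s) ≤ π / 2 := by
    linarith [min_le_left (s - t₁) (t₂ - s), min_le_right (s - t₁) (t₂ - s)]
  calc δ * τ / (2 * π) = δ * (2 / π * (τ / 4)) := by field_simp; ring
    _ ≤ ‖v‖ * cos (s + φ - polarAngle v) := by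
      refine mul_le_mul (hδV v hv) ?_ (by positivity) hv0.le
      calc 2 / π * (τ / 4) ≤ 2 / π * min (s - t₁) (t₂ - s) := by gcongr
        _ ≤ _ := (mul_le_sin (by linarith) hm').trans hsin
    _ = ⟪unitVec (s + φ), v⟫ := (inner_unitVec_eq_norm_mul_cos _ _).symm

lemma exists_mem_Ico_forall_le_inner (hr : 0 < r) (hrV : r • unitVec φ ∈ V) (hδ : 0 < δ)
    (hδV : ∀ v ∈ V, δ ≤ ‖v‖) {m : ℕ} (hm : 0 < m) (hτm : 4 * π / m ≤ τ)
    (hτV : ENNReal.ofReal τ ≤ volume (angleSet V φ 0)) :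
    ∃ k ∈ Finset.Ico (0 : ℤ) m, ∀ v ∈ V, δ * τ / (2 * π) ≤ ⟪unitVec (2 * π * k / m), v⟫ := by
  obtain ⟨a, ha⟩ := exists_forall_Icc_le_inner hr hrV hδ hδV
    (lt_of_lt_of_le (by positivity) hτm) hτV
  obtain ⟨k, hk, s, hs, hsk⟩ := exists_mem_Icc_unitVec_eq_grid hm (a + φ)
  have hstep : 2 * π / m ≤ τ / 2 := by linarith [show 4 * π / m = 2 * (2 * π / m) by ring]
  refine ⟨k, hk, fun v hv => ?_⟩
  simpa [← hsk] using ha (s - φ) ⟨by linarith [hs.1], by linarith [hs.2]⟩ v hv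

end deepArc

lemma sum_le_of_forall_lt_le_sub {α : Type*} [LinearOrder α] {f c : α → ℝ} {a : α}
    {S : Finset α} {D : ℝ} (haS : ∀ i ∈ S, a < i) (hc : ∀ i ∈ S, ∀ j < i, c i ≤ f i - f j)
    (hD : ∀ b, f b - f a ≤ D) : ∑ i ∈ S, c i ≤ D := by
  suffices h : ∃ b, (b = a ∨ b ∈ S) ∧ ∑ i ∈ S, c i ≤ f b - f a by
    obtain ⟨b, -, hb⟩ := h
    exact hb.trans (hD b)
  induction S using Finset.induction_on_max with
  | empty => exact ⟨a, Or.inl rfl, by simp⟩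
  | insert i S hiS ih =>
    have hi := Finset.mem_insert_self i S
    obtain ⟨b, hb, hsum⟩ := ih (fun j hj => haS j (Finset.mem_insert_of_mem hj))
      (fun j hj => hc j (Finset.mem_insert_of_mem hj))
    have hbi : b < i := hb.elim (fun h => h ▸ haS i hi) (hiS b)
    refine ⟨i, Or.inr hi, ?_⟩
    rw [Finset.sum_insert fun h => (hiS i h).false]
    linarith [hc i hi b hbi]

lemma sum_le_card_mul_of_forall_lt_le_inner {E α κ : Type*} [NormedAddCommGroup E]
    [InnerProductSpace ℝ E] [LinearOrder α] [DecidableEq κ] {p : α → E} {a : α} {D : ℝ}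
    {u : κ → E} {c : α → ℝ} {S : Finset α} {K : Finset κ} {dir : α → κ}
    (hu : ∀ k ∈ K, ‖u k‖ = 1) (hD : ∀ b, ‖p b - p a‖ ≤ D) (haS : ∀ i ∈ S, a < i)
    (hdirK : ∀ i ∈ S, dir i ∈ K) (hdir : ∀ i ∈ S, ∀ j < i, c i ≤ ⟪u (dir i), p i - p j⟫) :
    ∑ i ∈ S, c i ≤ K.card * D := by
  rw [← Finset.sum_fiberwise_of_maps_to hdirK, ← nsmul_eq_mul]
  refine Finset.sum_le_card_nsmul _ _ _ fun k hk => sum_le_of_forall_lt_le_sub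
    (f := fun j => ⟪u k, p j⟫) (a := a) (fun i hi => haS i (Finset.mem_filter.mp hi).1)
    (fun i hi j hj => ?_) (fun b => ?_)
  · obtain ⟨hiS, rfl⟩ := Finset.mem_filter.mp hi
    simpa [inner_sub_right] using hdir i hiS j hj
  · calc ⟪u k, p b⟫ - ⟪u k, p a⟫ = ⟪u k, p b - p a⟫ := (inner_sub_right _ _ _).symm
      _ ≤ ‖u k‖ * ‖p b - p a‖ := real_inner_le_norm _ _
      _ ≤ D := by rw [hu k hk, one_mul]; exact hD b

def diffsBelow {n : ℕ} (p : Fin n → Pt) (i : Fin n) : Set Pt := (fun j => p i - p j) '' Iio i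

lemma limsup_vis_smul_le {n : ℕ} (p : Fin n → Pt) (φ : Fin n → ℝ) :
    limsup (fun ε : ℝ => vis (fun i => ε • p i)) (𝓝[>] 0) ≤
      ∑ i, volume (angleSet (diffsBelow p i) (φ i) 0) := by
  have hvis : ∀ ε > 0,
      vis (fun i => ε • p i) ≤ ∑ i, volume (angleSet (diffsBelow p i) (φ i) ε) := by
    intro ε hε
    refine Finset.sum_le_sum fun i _ =>
      le_trans (measure_mono ?_) (hausdorffMeasure_le_volume_angleSet hε (ε • p i))
    rintro x ⟨hx, hxj⟩
    refine ⟨hx, ?_⟩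
    rintro _ ⟨j, hj, rfl⟩
    rw [smul_sub, sub_sub_cancel]
    exact hxj j hj
  calc _ ≤ limsup (fun ε => ∑ i, volume (angleSet (diffsBelow p i) (φ i) ε)) (𝓝[>] 0) :=
        limsup_le_limsup (eventually_nhdsWithin_of_forall hvis)
    _ = _ := (tendsto_finsetSum _ fun i _ => tendsto_volume_angleSet).limsup_eq

lemma sum_volume_angleSet_le {n : ℕ} [NeZero n] {p : Fin n → Pt} (hp : Function.Injective p)
    {δ K : ℝ} (hδ : 0 < δ) (hδp : ∀ i j, i ≠ j → δ ≤ dist (p i) (p j))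
    (hK : ∀ i j, dist (p i) (p j) ≤ K * δ) {m : ℕ} (hm : 0 < m) :
    ∑ i, volume (angleSet (diffsBelow p i) (polarAngle (p i - p 0)) 0) ≤
      ENNReal.ofReal (2 * π + 2 * π * m * K + 4 * π * n / m) := by
  set A : Fin n → Set ℝ := fun i => angleSet (diffsBelow p i) (polarAngle (p i - p 0)) 0
  set τ : Fin n → ℝ := fun i => (volume (A i)).toReal
  have hτ : ∀ i, volume (A i) = ENNReal.ofReal (τ i) := fun i =>
    (ENNReal.ofReal_toReal (volume_angleSet_le.trans_lt ENNReal.ofReal_lt_top).ne).symm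
  have hτ2π : ∀ i, τ i ≤ 2 * π := fun i =>
    ENNReal.toReal_le_of_le_ofReal (by positivity) volume_angleSet_le
  set big := (Finset.univ.erase 0).filter fun i => 4 * π / m ≤ τ i
  set small := (Finset.univ.erase 0).filter fun i => ¬ 4 * π / m ≤ τ i
  have hdir : ∀ i ∈ big, ∃ k ∈ Finset.Ico (0 : ℤ) m,
      ∀ j < i, δ * τ i / (2 * π) ≤ ⟪unitVec (2 * π * k / m), p i - p j⟫ := by
    intro i hi
    obtain ⟨hi0, hτi⟩ := Finset.mem_filter.mp hi
    have hi0 := Finset.ne_of_mem_erase hi0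
    have hrV : ‖p i - p 0‖ • unitVec (polarAngle (p i - p 0)) ∈ diffsBelow p i := by
      rw [norm_smul_unitVec_polarAngle]
      exact ⟨0, (Fin.pos_iff_ne_zero' i).mpr hi0, rfl⟩
    have hδV : ∀ v ∈ diffsBelow p i, δ ≤ ‖v‖ := by
      rintro _ ⟨j, hj, rfl⟩
      exact dist_eq_norm (p i) (p j) ▸ hδp i j (ne_of_gt hj)
    obtain ⟨k, hk, h⟩ := exists_mem_Ico_forall_le_inner
      (norm_pos_iff.mpr (sub_ne_zero.mpr (hp.ne hi0))) hrV hδ hδV hm hτi (hτ i).ge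
    exact ⟨k, hk, fun j hj => h _ ⟨j, hj, rfl⟩⟩
  choose! dir hdirK hdirle using hdir
  have hbig : ∑ i ∈ big, τ i ≤ 2 * π * m * K := by
    have h := sum_le_card_mul_of_forall_lt_le_inner (a := 0)
      (u := fun k : ℤ => unitVec (2 * π * k / m)) (fun _ _ => norm_unitVec _)
      (fun b => dist_eq_norm (p b) (p 0) ▸ hK b 0)
      (fun i hi => (Fin.pos_iff_ne_zero' i).mpr
        (Finset.ne_of_mem_erase (Finset.mem_filter.mp hi).1)) hdirK hdirle
    rw [Int.card_Ico, sub_zero, Int.toNat_natCast, ← Finset.sum_div, ← Finset.mul_sum,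
      div_le_iff₀ (by positivity)] at h
    exact le_of_mul_le_mul_left (by linarith) hδ
  have hsmall : ∑ i ∈ small, τ i ≤ n * (4 * π / m) := by
    calc ∑ i ∈ small, τ i ≤ small.card • (4 * π / m) :=
          Finset.sum_le_card_nsmul _ _ _ fun i hi => (not_le.mp (Finset.mem_filter.mp hi).2).le
      _ ≤ n * (4 * π / m) := by
          rw [nsmul_eq_mul]
          gcongr
          exact_mod_cast (Finset.card_le_univ small).trans_eq (Fintype.card_fin n)
  rw [Finset.sum_congr rfl fun i _ => hτ i,
    ← ENNReal.ofReal_sum_of_nonneg fun i _ => ENNReal.toReal_nonneg]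
  refine ENNReal.ofReal_le_ofReal ?_
  rw [← Finset.add_sum_erase _ _ (Finset.mem_univ 0),
    ← Finset.sum_filter_add_sum_filter_not _ fun i => 4 * π / m ≤ τ i]
  have : n * (4 * π / m) = 4 * π * n / m := by ring
  linarith [hτ2π 0]

lemma CDense.exists_min_dist {n : ℕ} {C : ℝ} {p : Fin n → Pt} (h : CDense C p)
    (hp : Function.Injective p) (hn : 2 ≤ n) :
    ∃ δ > 0, (∀ i j, i ≠ j → δ ≤ dist (p i) (p j)) ∧ ∀ i j, dist (p i) (p j) ≤ C * √n * δ := by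
  have hne : (Finset.univ.offDiag : Finset (Fin n × Fin n)).Nonempty :=
    ⟨(⟨0, by omega⟩, ⟨1, by omega⟩), by simp [Fin.ext_iff]⟩
  obtain ⟨⟨k, l⟩, hkl, hmin⟩ :=
    Finset.exists_min_image _ (fun q : Fin n × Fin n => dist (p q.1) (p q.2)) hne
  have hkl : k ≠ l := (Finset.mem_offDiag.mp hkl).2.2
  exact ⟨dist (p k) (p l), dist_pos.mpr (hp.ne hkl),
    fun i j hij => hmin (i, j) (by simpa using hij), fun i j => h i j k l hkl⟩

lemma exists_nat_mul_sqrt_le_and_div_le {x : ℝ} (hx : 1 ≤ x) :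
    ∃ m : ℕ, 0 < m ∧ m * √x ≤ 2 * x ^ ((3 : ℝ) / 4) ∧ x / m ≤ x ^ ((3 : ℝ) / 4) := by
  set y := x ^ ((1 : ℝ) / 4)
  have hy : 1 ≤ y := Real.one_le_rpow hx (by norm_num)
  have hyx : y * √x = x ^ ((3 : ℝ) / 4) := by
    rw [Real.sqrt_eq_rpow, ← Real.rpow_add (by linarith)]
    norm_num
  have hxy : x = x ^ ((3 : ℝ) / 4) * y := by
    rw [← Real.rpow_add (by linarith)]
    norm_num
  have hm₁ : y ≤ ⌈y⌉₊ := Nat.le_ceil y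
  have hm₂ : (⌈y⌉₊ : ℝ) ≤ 2 * y := by linarith [Nat.ceil_lt_add_one (zero_le_one.trans hy)]
  refine ⟨⌈y⌉₊, by exact_mod_cast (by linarith : (0 : ℝ) < ⌈y⌉₊), ?_, ?_⟩
  · rw [← hyx, ← mul_assoc]
    exact mul_le_mul_of_nonneg_right hm₂ (Real.sqrt_nonneg x)
  · rw [div_le_iff₀ (by linarith)]
    calc x = x ^ ((3 : ℝ) / 4) * y := hxy
      _ ≤ x ^ ((3 : ℝ) / 4) * ⌈y⌉₊ := mul_le_mul_of_nonneg_left hm₁ (by positivity)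

/-- for `C`-dense sets, `limsup_{ε→0⁺} vis(εp) ≤ C' · n^{3/4}`. -/
theorem limsup_vis_scaled_le_of_cDense (C : ℝ) (hC : 0 < C) :
    ∃ C' : ℝ, 0 < C' ∧ ∀ n : ℕ, 2 ≤ n → ∀ p : Fin n → Pt,
      Function.Injective p → CDense C p →
      Filter.limsup (fun ε : ℝ => vis (fun i => ε • p i)) (𝓝[>] (0 : ℝ)) ≤
        ENNReal.ofReal (C' * (n : ℝ) ^ ((3 : ℝ) / 4)) := by
  refine ⟨2 * π * (3 + 2 * C), by positivity, fun n hn p hp hdense => ?_⟩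
  have : NeZero n := ⟨by omega⟩
  have hn₁ : (1 : ℝ) ≤ n := by exact_mod_cast (by omega : 1 ≤ n)
  obtain ⟨δ, hδ, hδp, hK⟩ := hdense.exists_min_dist hp hn
  obtain ⟨m, hm, hm₁, hm₂⟩ := exists_nat_mul_sqrt_le_and_div_le hn₁
  have h₃₄ : 1 ≤ (n : ℝ) ^ ((3 : ℝ) / 4) := Real.one_le_rpow hn₁ (by norm_num)
  calc _ ≤ ∑ i, volume (angleSet (diffsBelow p i) (polarAngle (p i - p 0)) 0) :=
        limsup_vis_smul_le p _
    _ ≤ ENNReal.ofReal (2 * π + 2 * π * m * (C * √n) + 4 * π * n / m) :=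
        sum_volume_angleSet_le hp hδ hδp hK hm
    _ ≤ _ := by
        refine ENNReal.ofReal_le_ofReal ?_
        have h₁ := mul_le_mul_of_nonneg_left hm₁ (by positivity : 0 ≤ 2 * π * C)
        have h₂ := mul_le_mul_of_nonneg_left hm₂ (by positivity : 0 ≤ 4 * π)
        have h₃ := mul_le_mul_of_nonneg_left h₃₄ (by positivity : 0 ≤ 2 * π)
        have : 4 * π * n / m = 4 * π * (n / m) := by ring
        linarith
end
end

section
/- Every set of n distinct points in ℝ² admits an enumeration (stacking order) p_1, …, p_n such that vis(p_1, …, p_n) ≥ (π/2) · ⌈n^{1/2}⌉. Consequently, v(n) ≥ (π/2) · n^{1/2} for every positive integer n. -/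
open MeasureTheory Filter Set Metric
open scoped ENNReal NNReal Topology

noncomputable section

/-!
Order the points coordinatewise. By Mirsky's theorem (the Erdős–Szekeres argument), `n` points
contain `⌈√n⌉` that form a chain or an antichain, i.e. go monotonically north-east or south-east.
Stack these first, in chain order. Every earlier centre then lies in the closed south-west
(resp. north-west) quadrant of the current one, so the opposite quarter of its boundary circle
stays visible and contributes `π / 2`.
-/

open scoped Finset RealInnerProductSpace

namespace Finset

/-- Mirsky's theorem: label each element by the size of the largest chain of which it is the top;
equal labels form antichains. -/
theorem exists_isChain_or_isAntichain_of_mul_lt_card {α : Type*} [PartialOrder α]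
    (s : Finset α) {r m : ℕ} (h : r * m < #s) :
    (∃ t ⊆ s, r < #t ∧ IsChain (· ≤ ·) (t : Set α)) ∨
      ∃ t ⊆ s, m < #t ∧ IsAntichain (· ≤ ·) (t : Set α) := by
  classical
  set chainsBelow : α → Finset (Finset α) := fun a =>
    s.powerset.filter fun c => IsChain (· ≤ ·) (c : Set α) ∧ ∀ b ∈ c, b ≤ a
  set height : α → ℕ := fun a => (chainsBelow a).sup card
  have singleton_mem : ∀ a ∈ s, {a} ∈ chainsBelow a := fun a ha => by
    simp [chainsBelow, ha]
  have exists_chain : ∀ a ∈ s, ∃ c ∈ chainsBelow a, height a = #c := fun a ha =>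
    exists_mem_eq_sup _ ⟨_, singleton_mem a ha⟩ _
  have one_le_height : ∀ a ∈ s, 1 ≤ height a := fun a ha =>
    le_sup (f := card) (singleton_mem a ha)
  have height_strictMono : ∀ a ∈ s, ∀ b ∈ s, a < b → height a < height b := by
    intro a ha b hb hab
    obtain ⟨c, hc, hca⟩ := exists_chain a ha
    simp only [chainsBelow, mem_filter, mem_powerset] at hc
    have hbc : b ∉ c := fun hb' => (hc.2.2 b hb').not_gt hab
    have hmem : insert b c ∈ chainsBelow b := by
      simp only [chainsBelow, mem_filter, mem_powerset, coe_insert]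
      refine ⟨insert_subset hb hc.1, hc.2.1.insert fun x hx _ => Or.inr ?_, ?_⟩
      · exact (hc.2.2 x hx).trans hab.le
      · intro x hx
        rcases mem_insert.1 hx with rfl | hx
        exacts [le_rfl, (hc.2.2 x hx).trans hab.le]
    calc height a < #(insert b c) := by rw [card_insert_of_notMem hbc, hca]; omega
      _ ≤ height b := le_sup (f := card) hmem
  by_cases hlong : ∃ a ∈ s, r < height a
  · obtain ⟨a, ha, hra⟩ := hlong
    obtain ⟨c, hc, hca⟩ := exists_chain a ha
    simp only [chainsBelow, mem_filter, mem_powerset] at hc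
    exact Or.inl ⟨c, hc.1, hca ▸ hra, hc.2.1⟩
  push Not at hlong
  obtain ⟨y, -, hy⟩ := exists_lt_card_fiber_of_mul_lt_card_of_maps_to (t := Icc 1 r)
    (fun a ha => mem_Icc.2 ⟨one_le_height a ha, hlong a ha⟩) (by simpa using h)
  refine Or.inr ⟨_, filter_subset _ s, hy, fun a ha b hb hne hle => ?_⟩
  simp only [coe_filter, Set.mem_ofPred_eq] at ha hb
  exact (height_strictMono a ha.1 b hb.1 (hle.lt_of_ne hne)).ne (ha.2.trans hb.2.symm)

end Finset

namespace VisiblePerimeter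

section Polygonal

variable {X : Type*} [MetricSpace X] [MeasurableSpace X] [BorelSpace X]

theorem edist_le_hausdorffMeasure_of_isPreconnected {s : Set X} (hs : IsPreconnected s)
    {x y : X} (hx : x ∈ s) (hy : y ∈ s) : edist x y ≤ μH[1] s := by
  have hlip : LipschitzWith 1 (dist x) := LipschitzWith.dist_right x
  have hsub : Icc 0 (dist x y) ⊆ dist x '' s :=
    (hs.image _ hlip.continuous.continuousOn).Icc_subset ⟨x, hx, dist_self x⟩ ⟨y, hy, rfl⟩
  calc edist x y = μH[1] (Icc 0 (dist x y)) := by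
        rw [hausdorffMeasure_real, Real.volume_Icc, sub_zero, edist_dist]
    _ ≤ μH[1] (dist x '' s) := measure_mono hsub
    _ ≤ μH[1] s := by simpa using hlip.hausdorffMeasure_image_le zero_le_one s

theorem sum_edist_le_hausdorffMeasure_image {γ : ℝ → X} {t : ℕ → ℝ} (ht : Monotone t) (m : ℕ)
    (hγ : ContinuousOn γ (Icc (t 0) (t m))) (hinj : InjOn γ (Icc (t 0) (t m))) :
    ∑ i ∈ Finset.range m, edist (γ (t i)) (γ (t (i + 1))) ≤ μH[1] (γ '' Icc (t 0) (t m)) := by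
  induction m with
  | zero => simp
  | succ m ih =>
    have hsplit : Icc (t 0) (t (m + 1)) = Icc (t 0) (t m) ∪ Icc (t m) (t (m + 1)) :=
      (Icc_union_Icc_eq_Icc (ht m.zero_le) (ht m.le_succ)).symm
    have hleft : Icc (t 0) (t m) ⊆ Icc (t 0) (t (m + 1)) := hsplit ▸ subset_union_left
    have hright : Icc (t m) (t (m + 1)) ⊆ Icc (t 0) (t (m + 1)) := hsplit ▸ subset_union_right
    set A := γ '' Icc (t 0) (t m)
    set B := γ '' Icc (t m) (t (m + 1))
    have hAB : A ∩ B ⊆ {γ (t m)} := by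
      rintro _ ⟨⟨a, ha, rfl⟩, b, hb, hba⟩
      have : b = a := hinj (hright hb) (hleft ha) hba
      rw [mem_singleton_iff, le_antisymm ha.2 (this ▸ hb.1)]
    have hB : MeasurableSet B :=
      (isCompact_Icc.image_of_continuousOn (hγ.mono hright)).isClosed.measurableSet
    have := Measure.nullSingletonClass_hausdorff (X := X) one_pos
    rw [Finset.sum_range_succ, hsplit, image_union]
    calc _ ≤ μH[1] A + μH[1] B :=
          add_le_add (ih (hγ.mono hleft) (hinj.mono hleft))
            (edist_le_hausdorffMeasure_of_isPreconnected
              (isPreconnected_Icc.image _ (hγ.mono hright))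
              (mem_image_of_mem _ (left_mem_Icc.2 (ht m.le_succ)))
              (mem_image_of_mem _ (right_mem_Icc.2 (ht m.le_succ))))
      _ = μH[1] (A ∪ B) + μH[1] (A ∩ B) := (measure_union_add_inter A hB).symm
      _ = μH[1] (A ∪ B) := by rw [measure_mono_null hAB (measure_singleton _), add_zero]

end Polygonal

theorem pi_div_two_sub_inv_le_mul_sin {N : ℝ} (hN : 1 ≤ N) :
    Real.pi / 2 - 1 / N ≤ N * (2 * Real.sin (Real.pi / (4 * N))) := by
  have hN0 : 0 < N := by linarith
  have hsin := Real.sin_gt_sub_cube (x := Real.pi / (4 * N)) (by positivity)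
  have hcube : N * (2 * ((Real.pi / (4 * N)) ^ 3 / 6)) ≤ 1 / N := by
    rw [show N * (2 * ((Real.pi / (4 * N)) ^ 3 / 6)) = Real.pi ^ 3 / (192 * N) / N by
      field_simp; ring]
    gcongr
    rw [div_le_one (by positivity)]
    nlinarith [Real.pi_le_four, Real.pi_pos, pow_le_pow_left₀ Real.pi_pos.le Real.pi_le_four 3]
  have hmain : N * (2 * (Real.pi / (4 * N))) = Real.pi / 2 := by field_simp; ring
  nlinarith

section Arc

variable {E : Type*} [NormedAddCommGroup E] [InnerProductSpace ℝ E] {u v : E}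

theorem norm_smul_add_smul_sq (hu : ‖u‖ = 1) (hv : ‖v‖ = 1) (huv : ⟪u, v⟫ = 0) (a b : ℝ) :
    ‖a • u + b • v‖ ^ 2 = a ^ 2 + b ^ 2 := by
  rw [norm_add_sq_real, norm_smul, norm_smul, real_inner_smul_left, real_inner_smul_right, huv,
    hu, hv, Real.norm_eq_abs, Real.norm_eq_abs]
  simp [sq_abs]

def arc (c u v : E) (θ : ℝ) : E := c + Real.cos θ • u + Real.sin θ • v

theorem continuous_arc (c u v : E) : Continuous (arc c u v) := by
  unfold arc; fun_prop

theorem arc_sub (c u v : E) (θ : ℝ) : arc c u v θ - c = Real.cos θ • u + Real.sin θ • v := by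
  simp only [arc]; abel

theorem inner_arc_sub (hu : ‖u‖ = 1) (huv : ⟪u, v⟫ = 0) (c : E) (θ : ℝ) :
    ⟪u, arc c u v θ - c⟫ = Real.cos θ := by
  rw [arc_sub, inner_add_right, real_inner_smul_right, real_inner_smul_right, huv,
    real_inner_self_eq_norm_sq, hu]
  ring

theorem dist_arc_self (hu : ‖u‖ = 1) (hv : ‖v‖ = 1) (huv : ⟪u, v⟫ = 0) (c : E) (θ : ℝ) :
    dist (arc c u v θ) c = 1 := by
  rw [dist_eq_norm, arc_sub, ← pow_eq_one_iff_of_nonneg (norm_nonneg _) two_ne_zero,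
    norm_smul_add_smul_sq hu hv huv, Real.cos_sq_add_sin_sq]

theorem dist_arc (hu : ‖u‖ = 1) (hv : ‖v‖ = 1) (huv : ⟪u, v⟫ = 0) (c : E) (a b : ℝ) :
    dist (arc c u v a) (arc c u v b) = 2 * |Real.sin ((a - b) / 2)| := by
  have hsub : arc c u v a - arc c u v b =
      (Real.cos a - Real.cos b) • u + (Real.sin a - Real.sin b) • v := by
    simp only [arc, sub_smul]; abel
  rw [dist_eq_norm, ← sq_eq_sq₀ (norm_nonneg _) (by positivity), hsub,
    norm_smul_add_smul_sq hu hv huv, Real.cos_sub_cos, Real.sin_sub_sin]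
  nlinarith [Real.sin_sq_add_cos_sq ((a + b) / 2), sq_abs (Real.sin ((a - b) / 2))]

theorem injOn_arc (hu : ‖u‖ = 1) (huv : ⟪u, v⟫ = 0) (c : E) :
    InjOn (arc c u v) (Icc 0 (Real.pi / 2)) := by
  intro a ha b hb hab
  refine Real.injOn_cos ⟨ha.1, by linarith [ha.2, Real.pi_pos]⟩
    ⟨hb.1, by linarith [hb.2, Real.pi_pos]⟩ ?_
  rw [← inner_arc_sub hu huv c a, ← inner_arc_sub hu huv c b, hab]

/-- `b` lies in the closed quadrant at `a` spanned by `u` and `v`. -/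
def QuadrantLE (u v a b : E) : Prop := ⟪u, a⟫ ≤ ⟪u, b⟫ ∧ ⟪v, a⟫ ≤ ⟪v, b⟫

theorem one_le_dist_arc_of_quadrantLE (hu : ‖u‖ = 1) (hv : ‖v‖ = 1) (huv : ⟪u, v⟫ = 0)
    {c q : E} (hqc : QuadrantLE u v q c) {θ : ℝ} (hθ : θ ∈ Icc 0 (Real.pi / 2)) :
    1 ≤ dist (arc c u v θ) q := by
  have hcos : 0 ≤ Real.cos θ :=
    Real.cos_nonneg_of_mem_Icc ⟨by linarith [hθ.1, Real.pi_pos], hθ.2⟩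
  have hsin : 0 ≤ Real.sin θ :=
    Real.sin_nonneg_of_nonneg_of_le_pi hθ.1 (by linarith [hθ.2, Real.pi_pos])
  have hw : ‖Real.cos θ • u + Real.sin θ • v‖ ^ 2 = 1 := by
    rw [norm_smul_add_smul_sq hu hv huv, Real.cos_sq_add_sin_sq]
  have hinner : 0 ≤ ⟪Real.cos θ • u + Real.sin θ • v, c - q⟫ := by
    rw [inner_add_left, real_inner_smul_left, real_inner_smul_left, inner_sub_right,
      inner_sub_right]
    nlinarith [mul_nonneg hcos (sub_nonneg.2 hqc.1), mul_nonneg hsin (sub_nonneg.2 hqc.2)]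
  have hsq : 1 ≤ dist (arc c u v θ) q ^ 2 := by
    rw [dist_eq_norm, show arc c u v θ - q = (c - q) + (arc c u v θ - c) by abel, arc_sub,
      norm_add_sq_real, hw, real_inner_comm]
    nlinarith [norm_nonneg (c - q)]
  nlinarith [dist_nonneg (x := arc c u v θ) (y := q)]

/-- The inscribed polygon with `m + 1` equal sides already has length `≥ π / 2 - 1 / (m + 1)`. -/
theorem ofReal_pi_div_two_le_hausdorffMeasure_arc [MeasurableSpace E] [BorelSpace E]
    (hu : ‖u‖ = 1) (hv : ‖v‖ = 1) (huv : ⟪u, v⟫ = 0) (c : E) :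
    ENNReal.ofReal (Real.pi / 2) ≤ μH[1] (arc c u v '' Icc 0 (Real.pi / 2)) := by
  have hpolygon : ∀ m : ℕ, ENNReal.ofReal (Real.pi / 2 - 1 / (m + 1)) ≤
      μH[1] (arc c u v '' Icc 0 (Real.pi / 2)) := by
    intro m
    set N : ℝ := m + 1 with hN
    have hN1 : 1 ≤ N := by simp [hN]
    set t : ℕ → ℝ := fun i => i * (Real.pi / 2 / N) with ht
    have htmono : Monotone t := fun i j hij => by
      simp only [ht]; gcongr
    have ht0 : t 0 = 0 := by simp [ht]
    have htN : t (m + 1) = Real.pi / 2 := by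
      simp only [ht]; push_cast; rw [← hN]; field_simp
    have hchord : ∀ i, edist (arc c u v (t i)) (arc c u v (t (i + 1))) =
        ENNReal.ofReal (2 * Real.sin (Real.pi / (4 * N))) := by
      intro i
      have hhalf : (t i - t (i + 1)) / 2 = -(Real.pi / (4 * N)) := by
        simp only [ht]; push_cast; field_simp; ring
      have hsin : 0 ≤ Real.sin (Real.pi / (4 * N)) :=
        Real.sin_nonneg_of_nonneg_of_le_pi (by positivity)
          (div_le_self Real.pi_pos.le (by linarith))
      rw [edist_dist, dist_arc hu hv huv, hhalf, Real.sin_neg, abs_neg, abs_of_nonneg hsin]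
    have hinscribed := sum_edist_le_hausdorffMeasure_image htmono (m + 1)
      (by rw [ht0, htN]; exact (continuous_arc c u v).continuousOn)
      (by rw [ht0, htN]; exact injOn_arc hu huv c)
    rw [ht0, htN, Finset.sum_congr rfl fun i _ => hchord i, Finset.sum_const,
      Finset.card_range, nsmul_eq_mul] at hinscribed
    calc ENNReal.ofReal (Real.pi / 2 - 1 / N)
        ≤ ENNReal.ofReal (N * (2 * Real.sin (Real.pi / (4 * N)))) :=
          ENNReal.ofReal_le_ofReal (pi_div_two_sub_inv_le_mul_sin hN1)
      _ = ((m + 1 : ℕ) : ℝ≥0∞) * ENNReal.ofReal (2 * Real.sin (Real.pi / (4 * N))) := by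
          rw [ENNReal.ofReal_mul (by positivity), hN, ← ENNReal.ofReal_natCast]
          push_cast; rfl
      _ ≤ _ := hinscribed
  have hlim : Tendsto (fun m : ℕ => ENNReal.ofReal (Real.pi / 2 - 1 / (m + 1))) atTop
      (𝓝 (ENNReal.ofReal (Real.pi / 2))) := by
    refine (ENNReal.continuous_ofReal.tendsto _).comp ?_
    simpa using tendsto_const_nhds.sub (tendsto_one_div_add_atTop_nhds_zero_nat (𝕜 := ℝ))
  exact le_of_tendsto' hlim hpolygon

/-- Stack the chain `J` first, sorted by `⟪u + v, ·⟫`: along a chain this order refines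
`QuadrantLE u v`. -/
theorem _root_.IsChain.exists_perm_quadrantLE {n : ℕ} {p : Fin n → E} {J : Finset (Fin n)}
    (hJ : IsChain (fun a b => QuadrantLE u v (p a) (p b)) (J : Set (Fin n))) :
    ∃ σ : Equiv.Perm (Fin n), ∀ i, σ i ∈ J → ∀ j < i, QuadrantLE u v (p (σ j)) (p (σ i)) := by
  classical
  set key : Fin n → ℕ ×ₗ ℝ := fun i => toLex (if i ∈ J then 0 else 1, ⟪u + v, p i⟫)
  obtain ⟨σ, hσ⟩ : ∃ σ : Equiv.Perm (Fin n), Monotone (key ∘ σ) := ⟨_, Tuple.monotone_sort key⟩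
  refine ⟨σ, fun i hi j hji => ?_⟩
  have hkey := hσ hji.le
  simp only [Function.comp_apply, key, hi, ↓reduceIte, Prod.Lex.toLex_le_toLex] at hkey
  have hj : σ j ∈ J := by
    by_contra hj
    simp [hj] at hkey
  simp only [hj, ↓reduceIte, lt_self_iff_false, inner_add_left, true_and, false_or] at hkey
  rcases hJ hj hi (σ.injective.ne hji.ne) with hle | ⟨h1, h2⟩
  · exact hle
  · exact ⟨by linarith, by linarith⟩

end Arc

/-- The disk at `p i`, `i ∈ I`, shows the whole quarter arc `arc (p i) u v '' Icc 0 (π / 2)`. -/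
theorem card_mul_ofReal_pi_div_two_le_vis {n : ℕ} (p : Fin n → Pt) {u v : Pt} (hu : ‖u‖ = 1)
    (hv : ‖v‖ = 1) (huv : ⟪u, v⟫ = 0) {I : Finset (Fin n)}
    (hI : ∀ i ∈ I, ∀ j < i, QuadrantLE u v (p j) (p i)) :
    #I * ENNReal.ofReal (Real.pi / 2) ≤ vis p := by
  have hvisible : ∀ i ∈ I, ENNReal.ofReal (Real.pi / 2) ≤
      μH[1] {x : Pt | dist x (p i) = 1 ∧ ∀ j : Fin n, j < i → 1 ≤ dist x (p j)} := by
    intro i hi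
    refine (ofReal_pi_div_two_le_hausdorffMeasure_arc hu hv huv (p i)).trans (measure_mono ?_)
    rintro _ ⟨θ, hθ, rfl⟩
    exact ⟨dist_arc_self hu hv huv _ θ,
      fun j hj => one_le_dist_arc_of_quadrantLE hu hv huv (hI i hi j hj) hθ⟩
  calc #I * ENNReal.ofReal (Real.pi / 2) = ∑ _i ∈ I, ENNReal.ofReal (Real.pi / 2) := by
        rw [Finset.sum_const, nsmul_eq_mul]
    _ ≤ ∑ i ∈ I, μH[1] {x : Pt | dist x (p i) = 1 ∧ ∀ j : Fin n, j < i → 1 ≤ dist x (p j)} :=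
        Finset.sum_le_sum hvisible
    _ ≤ vis p := Finset.sum_le_sum_of_subset (Finset.subset_univ I)

theorem ceil_sqrt_sub_one_mul_self_lt {n : ℕ} (hn : 0 < n) :
    (⌈Real.sqrt n⌉₊ - 1) * (⌈Real.sqrt n⌉₊ - 1) < n := by
  have hlt : ((⌈Real.sqrt n⌉₊ - 1 : ℕ) : ℝ) < Real.sqrt n :=
    Nat.lt_ceil.1 (Nat.sub_one_lt (Nat.ceil_pos.2 (Real.sqrt_pos.2 (by exact_mod_cast hn))).ne')
  rw [Real.lt_sqrt (Nat.cast_nonneg _)] at hlt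
  exact_mod_cast (sq _).symm.trans_lt hlt

theorem quadrantLE_single_iff (c : ℝ) (a b : Pt) :
    QuadrantLE (EuclideanSpace.single 0 1) (EuclideanSpace.single 1 c) a b ↔
      a 0 ≤ b 0 ∧ c * a 1 ≤ c * b 1 := by
  simp [QuadrantLE, EuclideanSpace.inner_single_left]

theorem isChain_of_isAntichain_fin_two {t : Set (Fin 2 → ℝ)} (ht : IsAntichain (· ≤ ·) t) :
    IsChain (fun x y => x 0 ≤ y 0 ∧ y 1 ≤ x 1) t := by
  intro x hx y hy hxy
  have hxy' : ¬x ≤ y := ht hx hy hxy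
  have hyx : ¬y ≤ x := ht hy hx hxy.symm
  simp only [Pi.le_def, Fin.forall_fin_two, not_and_or, not_le] at hxy' hyx
  rcases hxy' with h | h <;> rcases hyx with h' | h'
  all_goals first
    | exact absurd h h'.not_gt
    | exact Or.inl ⟨h'.le, h.le⟩
    | exact Or.inr ⟨h.le, h'.le⟩

/-- A long chain of the coordinatewise order goes north-east, a long antichain south-east. -/
theorem exists_isChain_quadrantLE {n : ℕ} (p : Fin n → Pt) (hp : Function.Injective p) :
    ∃ u v : Pt, ‖u‖ = 1 ∧ ‖v‖ = 1 ∧ ⟪u, v⟫ = 0 ∧ ∃ J : Finset (Fin n),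
      ⌈Real.sqrt n⌉₊ ≤ #J ∧ IsChain (fun a b => QuadrantLE u v (p a) (p b)) (J : Set (Fin n)) := by
  classical
  have hunit : ∀ c : ℝ, |c| = 1 → ‖EuclideanSpace.single (0 : Fin 2) (1 : ℝ)‖ = 1 ∧
      ‖EuclideanSpace.single (1 : Fin 2) c‖ = 1 ∧
      ⟪EuclideanSpace.single (0 : Fin 2) (1 : ℝ), EuclideanSpace.single 1 c⟫ = 0 := by
    intro c hc
    simp [EuclideanSpace.inner_single_left, hc]
  obtain ⟨hu, hv, huv⟩ := hunit 1 abs_one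
  rcases Nat.eq_zero_or_pos n with rfl | hn
  · exact ⟨_, _, hu, hv, huv, ∅, by simp, by simp⟩
  set q : Fin n → Fin 2 → ℝ := fun i => WithLp.ofLp (p i)
  have hq : Function.Injective q := (WithLp.ofLp_injective 2).comp hp
  have hcard : ∀ t ⊆ Finset.univ.image q, #(t.preimage q hq.injOn) = #t := by
    intro t ht
    rw [Finset.card_preimage, Finset.filter_true_of_mem fun x hx => ?_]
    obtain ⟨i, -, rfl⟩ := Finset.mem_image.1 (ht hx)
    exact Set.mem_range_self i
  obtain ⟨t, hts, htcard, hchain⟩ | ⟨t, hts, htcard, hanti⟩ :=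
    (Finset.univ.image q).exists_isChain_or_isAntichain_of_mul_lt_card
      (r := ⌈Real.sqrt n⌉₊ - 1) (m := ⌈Real.sqrt n⌉₊ - 1) (by
        rw [Finset.card_image_of_injective _ hq, Finset.card_univ, Fintype.card_fin]
        exact ceil_sqrt_sub_one_mul_self_lt hn)
  · refine ⟨_, _, hu, hv, huv, t.preimage q hq.injOn, by rw [hcard t hts]; omega, ?_⟩
    rw [Finset.coe_preimage]
    refine hchain.preimage _ _ q hq fun x y hxy => ?_
    rw [quadrantLE_single_iff, one_mul, one_mul]
    exact ⟨hxy 0, hxy 1⟩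
  · obtain ⟨hu', hv', huv'⟩ := hunit (-1) (by simp)
    refine ⟨_, _, hu', hv', huv', t.preimage q hq.injOn, by rw [hcard t hts]; omega, ?_⟩
    rw [Finset.coe_preimage]
    refine (isChain_of_isAntichain_fin_two hanti).preimage _ _ q hq fun x y hxy => ?_
    rw [quadrantLE_single_iff]
    exact ⟨hxy.1, by linarith [hxy.2]⟩

theorem exists_perm_ofReal_le_vis {n : ℕ} (p : Fin n → Pt) (hp : Function.Injective p) :
    ∃ σ : Equiv.Perm (Fin n),
      ENNReal.ofReal (Real.pi / 2 * (⌈Real.sqrt n⌉₊ : ℝ)) ≤ vis (p ∘ σ) := by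
  obtain ⟨u, v, hu, hv, huv, J, hJcard, hJ⟩ := exists_isChain_quadrantLE p hp
  obtain ⟨σ, hσ⟩ := hJ.exists_perm_quadrantLE
  refine ⟨σ, ?_⟩
  calc ENNReal.ofReal (Real.pi / 2 * (⌈Real.sqrt n⌉₊ : ℝ))
      = ⌈Real.sqrt n⌉₊ * ENNReal.ofReal (Real.pi / 2) := by
        rw [mul_comm, ENNReal.ofReal_mul (Nat.cast_nonneg _), ENNReal.ofReal_natCast]
    _ ≤ #(J.map σ.symm.toEmbedding) * ENNReal.ofReal (Real.pi / 2) := by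
        rw [Finset.card_map]
        gcongr
    _ ≤ vis (p ∘ σ) := card_mul_ofReal_pi_div_two_le_vis (p ∘ σ) hu hv huv
        fun i hi j hji => hσ i (by simpa using hi) j hji

end VisiblePerimeter

/-- every set of `n` distinct points admits a stacking order with visible
perimeter at least `(π/2)·⌈n^{1/2}⌉`; consequently `v(n) ≥ (π/2)·n^{1/2}`. -/
theorem exists_stacking_order_vis_ge_sqrt :
    (∀ (n : ℕ) (p : Fin n → Pt), Function.Injective p →
      ∃ σ : Equiv.Perm (Fin n),
        ENNReal.ofReal (Real.pi / 2 * (⌈Real.sqrt n⌉₊ : ℝ)) ≤ vis (p ∘ σ)) ∧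
    ∀ n : ℕ, 0 < n → ENNReal.ofReal (Real.pi / 2 * Real.sqrt n) ≤ vinf n := by
  refine ⟨fun n p hp => VisiblePerimeter.exists_perm_ofReal_le_vis p hp, fun n _ => ?_⟩
  unfold vinf
  refine le_iInf₂ fun p hp => ?_
  obtain ⟨σ, hσ⟩ := VisiblePerimeter.exists_perm_ofReal_le_vis p hp
  refine le_iSup_of_le σ (le_trans (ENNReal.ofReal_le_ofReal ?_) hσ)
  gcongr
  exact Nat.le_ceil _
end
end

section
/- For all positive integers c and r and every real δ > 0, setting n = r·c, there exists a set P of n distinct points in ℝ² such that no point of the plane lies in more than c of the closed unit disks centered at the points of P, and such that every enumeration (stacking order) p_1, …, p_n of P satisfies vis(p_1, …, p_n) ≤ r · (v(c) + δ). -/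
/-!
Choose `c` points `q` whose worst stacking order has visible perimeter within `δ` of `v(c)`, and
place `r` translates of `q` so far apart that centers in different copies are more than `2` apart.
Then no point of the plane is within distance `1` of centers from two copies, and in any stacking
order the visible part of a circle is cut only by disks of its own copy. The visible perimeter
therefore splits as a sum over the copies, and each summand is the visible perimeter of a
translate of a stacking order of `q`.
-/

open MeasureTheory Filter Set Metric
open scoped ENNReal NNReal Topology

noncomputable section

open Finset Function

lemma vis_isometryEquiv_comp {n : ℕ} (φ : Pt ≃ᵢ Pt) (p : Fin n → Pt) : vis (φ ∘ p) = vis p := by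
  refine Finset.sum_congr rfl fun i _ => ?_
  convert φ.symm.hausdorffMeasure_preimage 1 _ using 2
  ext x
  simp [← φ.symm.dist_eq x]

lemma vis_comp_orderEmbOfFin {n m : ℕ} (p : Fin n → Pt) (s : Finset (Fin n)) (h : #s = m) :
    vis (p ∘ s.orderEmbOfFin h) =
      ∑ i ∈ s, μH[1] {x : Pt | dist x (p i) = 1 ∧ ∀ j ∈ s, j < i → 1 ≤ dist x (p j)} := by
  conv_rhs => rw [← s.map_orderEmbOfFin_univ h, Finset.sum_map]
  refine Finset.sum_congr rfl fun a _ => ?_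
  congr 1
  ext x
  simp only [Set.mem_ofPred_eq, comp_apply, RelEmbedding.coe_toEmbedding]
  refine and_congr_right fun _ => ⟨fun hx j hjs hj => ?_,
    fun hx b hb => hx _ (mem_map_of_mem _ (mem_univ b)) ((s.orderEmbOfFin h).lt_iff_lt.2 hb)⟩
  obtain ⟨b, -, rfl⟩ := mem_map.1 hjs
  exact hx b ((s.orderEmbOfFin h).lt_iff_lt.1 hj)

section Clusters

variable {n : ℕ} {ι : Type*} [Fintype ι] [DecidableEq ι]

lemma vis_eq_sum_of_far (p : Fin n → Pt) (g : Fin n → ι)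
    (hfar : ∀ i j, g i ≠ g j → 2 ≤ dist (p i) (p j)) :
    vis p = ∑ k, ∑ i with g i = k,
      μH[1] {x : Pt | dist x (p i) = 1 ∧ ∀ j ∈ ({j | g j = k} : Finset _), j < i →
        1 ≤ dist x (p j)} := by
  rw [vis, ← Finset.sum_fiberwise univ g]
  refine sum_congr rfl fun k _ => sum_congr rfl fun i hi => ?_
  congr 1
  ext x
  refine and_congr_right fun hx => ⟨fun h j _ hj => h j hj, fun h j hj => ?_⟩
  by_cases hg : g j = k
  · exact h j (by simpa using hg) hj
  · have := hfar i j (by rw [(mem_filter.1 hi).2]; exact Ne.symm hg)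
    linarith [dist_triangle_left (p i) (p j) x]

lemma vis_eq_sum_vis_fiber {m : ℕ} (p : Fin n → Pt) (g : Fin n → ι)
    (hfar : ∀ i j, g i ≠ g j → 2 ≤ dist (p i) (p j)) (hcard : ∀ k, #{i | g i = k} = m) :
    vis p = ∑ k, vis (p ∘ ({i | g i = k} : Finset _).orderEmbOfFin (hcard k)) := by
  simp only [vis_eq_sum_of_far p g hfar, vis_comp_orderEmbOfFin]

end Clusters

lemma card_filter_fst_eq {α ι κ : Type*} [Fintype α] [Fintype κ] [DecidableEq ι]
    (f : α ≃ ι × κ) (k : ι) : #{a | (f a).1 = k} = Fintype.card κ := by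
  refine (card_nbij' (fun a => (f a).2) (fun b => f.symm (k, b)) ?_ ?_ ?_ ?_).trans card_univ
  · simp
  · simp
  · intro a ha
    rw [← (mem_filter.1 ha).2]
    simp
  · intro b _
    simp

lemma vis_translates_le {n r c : ℕ} (q : Fin c → Pt) (v : Fin r → Pt)
    (hfar : ∀ z w : Fin r × Fin c, z.1 ≠ w.1 → 2 ≤ dist (q z.2 + v z.1) (q w.2 + v w.1))
    (f : Fin n ≃ Fin r × Fin c) :
    vis (fun i => q (f i).2 + v (f i).1) ≤ r * ⨆ τ : Equiv.Perm (Fin c), vis (q ∘ τ) := by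
  have hcard (k : Fin r) : #{i | (f i).1 = k} = c := by
    rw [card_filter_fst_eq, Fintype.card_fin]
  rw [vis_eq_sum_vis_fiber _ (fun i => (f i).1) (fun i j h => hfar _ _ h) hcard]
  calc _ ≤ ∑ _k : Fin r, ⨆ τ : Equiv.Perm (Fin c), vis (q ∘ τ) := sum_le_sum fun k _ => ?_
    _ = _ := by simp
  set e := ({i | (f i).1 = k} : Finset (Fin n)).orderEmbOfFin (hcard k)
  have hk (a : Fin c) : (f (e a)).1 = k := (mem_filter.1 (orderEmbOfFin_mem _ (hcard k) a)).2
  have hτ : Injective fun a => (f (e a)).2 := fun a b h =>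
    e.injective (f.injective (Prod.ext (by rw [hk, hk]) h))
  calc vis _ = vis (IsometryEquiv.addRight (v k) ∘ q ∘ fun a => (f (e a)).2) := by
        congr 1; funext a; simp [hk]
    _ = vis (q ∘ Equiv.ofBijective _ hτ.bijective_of_finite) := vis_isometryEquiv_comp _ _
    _ ≤ _ := le_iSup (fun τ : Equiv.Perm (Fin c) => vis (q ∘ τ)) _

lemma ncard_setOf_dist_le_one_le {α ι : Type*} [Finite α] (p : α → Pt) (g : α → ι)
    (hfar : ∀ i j, g i ≠ g j → 2 < dist (p i) (p j)) {m : ℕ}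
    (hm : ∀ k, {i | g i = k}.ncard ≤ m) (x : Pt) : {i | dist x (p i) ≤ 1}.ncard ≤ m := by
  rcases Set.eq_empty_or_nonempty {i | dist x (p i) ≤ 1} with h | ⟨i₀, hi₀⟩
  · simp [h]
  refine (Set.ncard_le_ncard (fun i (hi : dist x (p i) ≤ 1) => ?_) (Set.toFinite _)).trans
    (hm (g i₀))
  by_contra hg
  linarith [hfar i i₀ hg, dist_triangle_left (p i) (p i₀) x, hi₀.out]

lemma exists_injective_iSup_vis_le (c : ℕ) {ε : ℝ≥0∞} (hε : ε ≠ 0) :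
    ∃ q : Fin c → Pt, Injective q ∧ ⨆ σ : Equiv.Perm (Fin c), vis (q ∘ σ) ≤ vinf c + ε := by
  by_cases htop : vinf c = ⊤
  · let q : Fin c ↪ Pt := Fin.valEmbedding.trans (Infinite.natEmbedding Pt)
    exact ⟨q, q.injective, by simp [htop]⟩
  · obtain ⟨q, hq⟩ := iInf_lt_iff.1 (ENNReal.lt_add_right htop hε)
    obtain ⟨hinj, hlt⟩ := iInf_lt_iff.1 hq
    exact ⟨q, hinj, hlt.le⟩

lemma exists_far_translates {κ : Type*} [Finite κ] (q : κ → Pt) (r : ℕ) (d : ℝ) :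
    ∃ v : Fin r → Pt, ∀ z w : Fin r × κ, z.1 ≠ w.1 →
      d < dist (q z.2 + v z.1) (q w.2 + v w.1) := by
  obtain ⟨D, hD⟩ := Finite.exists_le fun z : κ × κ => dist (q z.1) (q z.2)
  -- consecutive translates are `L`, more than `D + d`, apart
  set L := |D| + |d| + 1
  have hL : 0 < L := by positivity
  set v : Fin r → Pt := fun k => EuclideanSpace.single 0 (L * k)
  refine ⟨v, fun z w hzw => ?_⟩
  have hkw : (1 : ℝ) ≤ |((z.1 : ℕ) : ℝ) - (w.1 : ℕ)| := by
    have h : ((z.1 : ℕ) : ℤ) ≠ (w.1 : ℕ) := by exact_mod_cast Fin.val_ne_of_ne hzw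
    exact_mod_cast Int.one_le_abs (sub_ne_zero.2 h)
  have hv : L ≤ dist (v z.1) (v w.1) := by
    rw [PiLp.dist_single_same, Real.dist_eq, ← mul_sub, abs_mul, abs_of_pos hL]
    exact le_mul_of_one_le_right hL.le hkw
  have := dist_add_add_le (q z.2 + v z.1) (-q z.2) (q w.2 + v w.1) (-q w.2)
  simp only [add_neg_cancel_comm, dist_neg_neg] at this
  linarith [hD (z.2, w.2), le_abs_self D, le_abs_self d]

theorem exists_bounded_overlap_vis_le_general (c r : ℕ)
    (δ : ℝ) (hδ : 0 < δ) :
    ∃ p : Fin (r * c) → Pt, Function.Injective p ∧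
      (∀ x : Pt, ({i : Fin (r * c) | dist x (p i) ≤ 1}).ncard ≤ c) ∧
      ∀ σ : Equiv.Perm (Fin (r * c)),
        vis (p ∘ σ) ≤ (r : ℝ≥0∞) * (vinf c + ENNReal.ofReal δ) := by
  obtain ⟨q, hq, hq_vis⟩ := exists_injective_iSup_vis_le c (ENNReal.ofReal_pos.2 hδ).ne'
  obtain ⟨v, hfar⟩ := exists_far_translates q r 2
  set f : Fin (r * c) ≃ Fin r × Fin c := finProdFinEquiv.symm
  have hinj : Injective fun z : Fin r × Fin c => q z.2 + v z.1 :=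
      fun z w (h : q z.2 + v z.1 = q w.2 + v w.1) => by
    by_cases h₁ : z.1 = w.1
    · rw [h₁] at h
      exact Prod.ext h₁ (hq (add_right_cancel h))
    · have := hfar z w h₁
      rw [h, dist_self] at this
      norm_num at this
  refine ⟨fun i => q (f i).2 + v (f i).1, hinj.comp f.injective, fun x => ?_, fun σ => ?_⟩
  · refine ncard_setOf_dist_le_one_le _ (fun i => (f i).1) (fun i j h => hfar _ _ h)
      (fun k => ?_) x
    rw [Set.ncard_eq_toFinset_card', Set.toFinset_ofPred, card_filter_fst_eq, Fintype.card_fin]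
  · calc vis _ ≤ r * ⨆ τ : Equiv.Perm (Fin c), vis (q ∘ τ) :=
          vis_translates_le q v (fun z w h => (hfar z w h).le) (σ.trans f)
      _ ≤ _ := by gcongr

/-- tightness of the bounded-overlap bound: there is a set of `n = r·c`
points with overlap at most `c` such that every stacking order has visible perimeter at
most `r·(v(c) + δ)`. -/
theorem exists_bounded_overlap_vis_le (c r : ℕ) (hc : 0 < c) (hr : 0 < r)
    (δ : ℝ) (hδ : 0 < δ) :
    ∃ p : Fin (r * c) → Pt, Function.Injective p ∧
      (∀ x : Pt, ({i : Fin (r * c) | dist x (p i) ≤ 1}).ncard ≤ c) ∧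
      ∀ σ : Equiv.Perm (Fin (r * c)),
        vis (p ∘ σ) ≤ (r : ℝ≥0∞) * (vinf c + ENNReal.ofReal δ) :=
  exists_bounded_overlap_vis_le_general c r δ hδ
end
end
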